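/- arXiv:2409.19791 — 10 statements merged into one kernel-verified Lean document; each statement's English description precedes it below -/
import Mathlib

section
/- Let E be a finite-dimensional real inner product space, let p ≥ 2 be an integer, and let f : E → ℝ be C^p-smooth with ∇f(0) = 0. Let T := ker(∇²f(0)), where ∇²f(0) is the Hessian of f at 0 viewed as a self-adjoint linear operator on E, and let T⊥ be the orthogonal complement of T. Then there exist open neighborhoods U of 0 in T and V of 0 in T⊥ and a C^{p−1}-smooth map v : U → V such that v(0) = 0, the derivative Dv(0) = 0, and for every u ∈ U and w ∈ V one has P_{T⊥}(∇f(u + w)) = 0 if and only if w = v(u), where P_{T⊥} denotes the orthogonal projection onto T⊥. Consequently, near 0 the Morse ravine {u + w : u ∈ T, w ∈ T⊥, P_{T⊥}(∇f(u + w)) = 0} coincides with the graph {u + v(u) : u ∈ U}, and is therefore a C^{p−1}-smooth manifold whose tangent space at 0 equals T. -/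
/-!
The Hessian `A = ∇²f(0)` is self-adjoint, so its range is orthogonal to `T = ker A` and
`w ↦ P_{Tᗮ}(A w)` is an isomorphism of `Tᗮ`. This is the partial derivative in `w` at `0` of the
`C^{p-1}` map `G(u, w) = P_{Tᗮ}(∇f(u + w))`, so the implicit function theorem solves `G(u, w) = 0`
as `w = v(u)` near `0`. Since `A` vanishes on `T`, the partial derivative of `G` in `u` vanishes
at `0`, and hence so does `Dv(0)`.
-/

open InnerProductSpace Set Filter Topology

section ImplicitFunction

variable {𝕜 : Type*} [RCLike 𝕜]
  {E₁ : Type*} [NormedAddCommGroup E₁] [NormedSpace 𝕜 E₁] [CompleteSpace E₁]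
  {E₂ : Type*} [NormedAddCommGroup E₂] [NormedSpace 𝕜 E₂] [CompleteSpace E₂]
  {F : Type*} [NormedAddCommGroup F] [NormedSpace 𝕜 F] [CompleteSpace F]

/- `n` is finite so that smoothness at `u.1` propagates to a neighbourhood
(`ContDiffAt.eventually`). -/
theorem ContDiffAt.exists_isOpen_apply_eq_iff_implicitFunction {f : E₁ × E₂ → F}
    {u : E₁ × E₂} {n : ℕ} (cdf : ContDiffAt 𝕜 n f u) (hn : (n : WithTop ℕ∞) ≠ 0)
    (if₂ : (fderiv 𝕜 f u ∘L .inr 𝕜 E₁ E₂).IsInvertible) :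
    ∃ U V, IsOpen U ∧ u.1 ∈ U ∧ IsOpen V ∧ u.2 ∈ V ∧
      ContDiffOn 𝕜 n (cdf.implicitFunction hn if₂) U ∧
      MapsTo (cdf.implicitFunction hn if₂) U V ∧
      ∀ x ∈ U, ∀ y ∈ V, f (x, y) = f u ↔ y = cdf.implicitFunction hn if₂ x := by
  set ψ := cdf.implicitFunction hn if₂
  obtain ⟨U₀, V, hU₀, hu₀, hV, hv, hU₀V⟩ :=
    mem_nhds_prod_iff'.mp (cdf.eventually_apply_eq_iff_implicitFunction hn if₂)
  have hψ : Tendsto ψ (𝓝 u.1) (𝓝 u.2) := by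
    have := (cdf.hasStrictFDerivAt_implicitFunction hn if₂).continuousAt.tendsto
    rwa [cdf.implicitFunction_apply_self hn if₂] at this
  have hgood : ∀ᶠ x in 𝓝 u.1, x ∈ U₀ ∧ ContDiffAt 𝕜 n ψ x ∧ ψ x ∈ V :=
    (show ∀ᶠ x in 𝓝 u.1, x ∈ U₀ from hU₀.mem_nhds hu₀).and <|
      ((cdf.contDiffAt_implicitFunction hn if₂).eventually (by simp)).and
        (hψ.eventually (hV.mem_nhds hv))
  obtain ⟨U, hUgood, hU, hu⟩ := mem_nhds_iff.mp hgood
  refine ⟨U, V, hU, hu, hV, hv, fun x hx ↦ (hUgood hx).2.1.contDiffWithinAt,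
    fun x hx ↦ (hUgood hx).2.2, fun x hx y hy ↦ ?_⟩
  exact (hU₀V ⟨(hUgood hx).1, hy⟩).trans eq_comm

end ImplicitFunction

section InnerProductSpace

variable {𝕜 : Type*} [RCLike 𝕜] {E : Type*} [NormedAddCommGroup E] [InnerProductSpace 𝕜 E]
  [FiniteDimensional 𝕜 E]

theorem LinearMap.IsSymmetric.isInvertible_compression_ker_orthogonal
    {A : E →L[𝕜] E} (hA : (A : E →ₗ[𝕜] E).IsSymmetric) :
    ((LinearMap.ker (A : E →ₗ[𝕜] E))ᗮ.orthogonalProjectionOnto ∘L A ∘L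
      (LinearMap.ker (A : E →ₗ[𝕜] E))ᗮ.subtypeL).IsInvertible := by
  have hrange : LinearMap.range (A : E →ₗ[𝕜] E) ≤ (LinearMap.ker (A : E →ₗ[𝕜] E))ᗮ := by
    rw [← hA.orthogonal_range]
    exact Submodule.le_orthogonal_orthogonal _
  set K := LinearMap.ker (A : E →ₗ[𝕜] E)
  have hinj : Function.Injective (Kᗮ.orthogonalProjectionOnto ∘L A ∘L Kᗮ.subtypeL) := by
    rw [injective_iff_map_eq_zero]
    intro w hw
    have hAw : A w ∈ Kᗮ := hrange (LinearMap.mem_range_self (A : E →ₗ[𝕜] E) w)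
    have hAw0 : A w = 0 := (Submodule.orthogonal_disjoint Kᗮ).le_bot
      ⟨hAw, Submodule.orthogonalProjectionOnto_eq_zero_iff.mp hw⟩
    exact Subtype.ext <| (Submodule.orthogonal_disjoint K).le_bot ⟨hAw0, w.2⟩
  exact ⟨(LinearEquiv.ofInjectiveEndo _ hinj).toContinuousLinearEquiv, rfl⟩

end InnerProductSpace

section Gradient

variable {E : Type*} [NormedAddCommGroup E] [InnerProductSpace ℝ E] [CompleteSpace E]
  {f : E → ℝ} {x : E}

theorem ContDiffAt.contDiffAt_gradient {m n : WithTop ℕ∞} (hf : ContDiffAt ℝ n f x)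
    (hmn : m + 1 ≤ n) :
    ContDiffAt ℝ m (gradient f) x :=
  (toDual ℝ E).symm.toContinuousLinearEquiv.contDiff.contDiffAt.comp x (hf.fderiv_right hmn)

theorem ContDiffAt.inner_fderiv_gradient (hf : ContDiffAt ℝ 2 f x) (v w : E) :
    ⟪fderiv ℝ (gradient f) x v, w⟫_ℝ = fderiv ℝ (fderiv ℝ f) x v w := by
  have hgrad : DifferentiableAt ℝ (gradient f) x :=
    (hf.contDiffAt_gradient (m := 1) le_rfl).differentiableAt one_ne_zero
  have hfderiv : DifferentiableAt ℝ (fderiv ℝ f) x :=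
    (hf.fderiv_right (m := 1) le_rfl).differentiableAt one_ne_zero
  have hinner : (fun z ↦ ⟪gradient f z, w⟫_ℝ) = fun z ↦ fderiv ℝ f z w :=
    funext fun z ↦ toDual_symm_apply
  have h := fderiv_inner_apply ℝ hgrad (differentiableAt_const w) v
  rw [hinner, fderiv_clm_apply hfderiv (differentiableAt_const w)] at h
  simpa using h.symm

theorem ContDiffAt.isSymmetric_fderiv_gradient (hf : ContDiffAt ℝ 2 f x) :
    (fderiv ℝ (gradient f) x : E →ₗ[ℝ] E).IsSymmetric := fun v w ↦ by
  rw [ContinuousLinearMap.coe_coe, hf.inner_fderiv_gradient, real_inner_comm,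
    hf.inner_fderiv_gradient, (hf.isSymmSndFDerivAt (by simp)).eq]

end Gradient

section Ravine

variable {E : Type*} [NormedAddCommGroup E] [InnerProductSpace ℝ E] [CompleteSpace E]
  (f : E → ℝ) (T : Submodule ℝ E)

noncomputable def ravineMap (x : T × Tᗮ) : Tᗮ :=
  Tᗮ.orthogonalProjectionOnto (gradient f (x.1 + x.2))

variable {f T}

theorem ravineMap_zero (hcrit : gradient f 0 = 0) : ravineMap f T 0 = 0 := by
  simp [ravineMap, hcrit]

theorem contDiffAt_ravineMap {n : WithTop ℕ∞} {x : T × Tᗮ}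
    (hf : ContDiffAt ℝ n (gradient f) (x.1 + x.2)) : ContDiffAt ℝ n (ravineMap f T) x := by
  have hsum : ContDiffAt ℝ n (fun x : T × Tᗮ ↦ (x.1 : E) + x.2) x :=
    (T.subtypeL.coprod Tᗮ.subtypeL).contDiff.contDiffAt
  have hgrad : ContDiffAt ℝ n (gradient f ∘ fun x : T × Tᗮ ↦ (x.1 : E) + x.2) x :=
    hf.comp x hsum
  exact Tᗮ.orthogonalProjectionOnto.contDiff.contDiffAt.comp x hgrad

theorem hasFDerivAt_ravineMap {A : E →L[ℝ] E} {x : T × Tᗮ}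
    (hA : HasFDerivAt (gradient f) A (x.1 + x.2)) :
    HasFDerivAt (ravineMap f T)
      (Tᗮ.orthogonalProjectionOnto ∘L A ∘L T.subtypeL.coprod Tᗮ.subtypeL) x := by
  have hsum : HasFDerivAt (fun x : T × Tᗮ ↦ (x.1 : E) + x.2) (T.subtypeL.coprod Tᗮ.subtypeL) x :=
    (T.subtypeL.coprod Tᗮ.subtypeL).hasFDerivAt
  have hgrad : HasFDerivAt (gradient f ∘ fun x : T × Tᗮ ↦ (x.1 : E) + x.2)
      (A ∘L T.subtypeL.coprod Tᗮ.subtypeL) x := hA.comp x hsum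
  exact Tᗮ.orthogonalProjectionOnto.hasFDerivAt.comp x hgrad

theorem fderiv_ravineMap_comp_inl {A : E →L[ℝ] E} (hA : HasFDerivAt (gradient f) A 0)
    (hT : T ≤ LinearMap.ker (A : E →ₗ[ℝ] E)) :
    fderiv ℝ (ravineMap f T) 0 ∘L .inl ℝ T Tᗮ = 0 := by
  ext u
  have hAu : A u = 0 := LinearMap.mem_ker.mp (hT u.2)
  simp [(hasFDerivAt_ravineMap (x := 0) (by simpa using hA)).fderiv, hAu]

theorem isInvertible_fderiv_ravineMap_comp_inr [FiniteDimensional ℝ E] {A : E →L[ℝ] E}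
    (hA : HasFDerivAt (gradient f) A 0) (hsymm : (A : E →ₗ[ℝ] E).IsSymmetric)
    (hT : T = LinearMap.ker (A : E →ₗ[ℝ] E)) :
    (fderiv ℝ (ravineMap f T) 0 ∘L .inr ℝ T Tᗮ).IsInvertible := by
  have hinr : fderiv ℝ (ravineMap f T) 0 ∘L .inr ℝ T Tᗮ =
      Tᗮ.orthogonalProjectionOnto ∘L A ∘L Tᗮ.subtypeL := by
    ext w
    simp [(hasFDerivAt_ravineMap (x := 0) (by simpa using hA)).fderiv]
  rw [hinr]
  subst hT
  exact hsymm.isInvertible_compression_ker_orthogonal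

theorem ravine_eq_graph {U : Set T} {V : Set Tᗮ} {v : T → Tᗮ} (hUV : MapsTo v U V)
    (hv : ∀ u ∈ U, ∀ w ∈ V, ravineMap f T (u, w) = 0 ↔ w = v u) :
    {x : E | ∃ u ∈ U, ∃ w ∈ V,
        x = (u : E) + (w : E) ∧ Tᗮ.orthogonalProjectionOnto (gradient f x) = 0} =
      {x : E | ∃ u ∈ U, x = (u : E) + (v u : E)} := by
  ext x
  constructor
  · rintro ⟨u, hu, w, hw, rfl, hx⟩
    exact ⟨u, hu, by rw [(hv u hu w hw).mp hx]⟩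
  · rintro ⟨u, hu, rfl⟩
    exact ⟨u, hu, v u, hUV hu, rfl, (hv u hu _ (hUV hu)).mpr rfl⟩

end Ravine

/-- **Smoothness of the Morse ravine.**
Let `E` be a finite-dimensional real inner product space, `p ≥ 2`, and `f : E → ℝ`
a `C^p`-smooth function with `∇f(0) = 0`.  With `T := ker(∇²f(0))` (the Hessian being
the derivative of the gradient at `0`), there are open neighborhoods `U` of `0` in `T`
and `V` of `0` in `Tᗮ` and a `C^{p-1}`-smooth map `v : U → V` with `v 0 = 0`,
`Dv(0) = 0`, such that for `u ∈ U`, `w ∈ V` one has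
`P_{Tᗮ}(∇f(u + w)) = 0 ↔ w = v u`; consequently near `0` the Morse ravine coincides
with the graph of `v`. -/
theorem morse_ravine_graphical_representation
    {E : Type*} [NormedAddCommGroup E] [InnerProductSpace ℝ E] [FiniteDimensional ℝ E]
    (p : ℕ) (hp : 2 ≤ p) (f : E → ℝ) (hf : ContDiff ℝ p f)
    (hcrit : gradient f 0 = 0)
    (T : Submodule ℝ E) (hT : T = LinearMap.ker (fderiv ℝ (gradient f) 0 : E →ₗ[ℝ] E)) :
    ∃ (U : Set T) (V : Set Tᗮ) (v : T → Tᗮ),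
      IsOpen U ∧ (0 : T) ∈ U ∧ IsOpen V ∧ (0 : Tᗮ) ∈ V ∧
      ContDiffOn ℝ (p - 1 : ℕ) v U ∧ v 0 = 0 ∧ fderiv ℝ v 0 = 0 ∧
      (∀ u ∈ U, v u ∈ V) ∧
      (∀ u ∈ U, ∀ w ∈ V,
        (Submodule.orthogonalProjectionOnto Tᗮ (gradient f ((u : E) + (w : E))) = 0 ↔ w = v u)) ∧
      {x : E | ∃ u ∈ U, ∃ w ∈ V, x = (u : E) + (w : E) ∧
          Submodule.orthogonalProjectionOnto Tᗮ (gradient f x) = 0}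
        = {x : E | ∃ u ∈ U, x = (u : E) + ((v u : Tᗮ) : E)} := by
  have hpn : ((p - 1 : ℕ) : WithTop ℕ∞) ≠ 0 := by norm_cast; omega
  have hgrad : ContDiffAt ℝ (p - 1 : ℕ) (gradient f) 0 :=
    hf.contDiffAt.contDiffAt_gradient (by norm_cast; omega)
  have hA : HasFDerivAt (gradient f) (fderiv ℝ (gradient f) 0) 0 :=
    (hgrad.differentiableAt hpn).hasFDerivAt
  have hsymm := (hf.contDiffAt.of_le (by exact_mod_cast hp) :
    ContDiffAt ℝ 2 f 0).isSymmetric_fderiv_gradient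
  have hG : ContDiffAt ℝ (p - 1 : ℕ) (ravineMap f T) 0 :=
    contDiffAt_ravineMap (by simpa using hgrad)
  have if₂ := isInvertible_fderiv_ravineMap_comp_inr hA hsymm hT
  obtain ⟨U, V, hU, hU0, hV, hV0, hv, hUV, hiff⟩ :=
    hG.exists_isOpen_apply_eq_iff_implicitFunction hpn if₂
  have hvderiv := hG.hasStrictFDerivAt_implicitFunction hpn if₂
  rw [fderiv_ravineMap_comp_inl hA hT.le, ContinuousLinearMap.comp_zero] at hvderiv
  have hravine : ∀ u ∈ U, ∀ w ∈ V,
      ravineMap f T (u, w) = 0 ↔ w = hG.implicitFunction hpn if₂ u :=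
    fun u hu w hw ↦ ravineMap_zero hcrit ▸ hiff u hu w hw
  exact ⟨U, V, _, hU, hU0, hV, hV0, hv, hG.implicitFunction_apply_self hpn if₂,
    by simpa using hvderiv.hasFDerivAt.fderiv, hUV, hravine, ravine_eq_graph hUV hravine⟩
end

section
/- Let E be a finite-dimensional real inner product space, let M ⊆ E, let x̄ ∈ M, and let U be an open neighborhood of x̄. Suppose P : U → E is a C¹-smooth nearest-point projection onto M, i.e. P(x) ∈ M and ‖x − P(x)‖ = dist(x, M) for all x ∈ U, and P(x) = x for x ∈ M ∩ U. Suppose R : U → E is C¹-smooth with R(x) ∈ M for all x ∈ U, R(x) = x for all x ∈ M ∩ U, and DR(x̄) = DP(x̄) (the Fréchet derivatives at x̄ coincide). Then ‖R(x) − P(x)‖ = o(dist(x, M)) as x → x̄; that is, for every ε > 0 there is δ > 0 such that ‖x − x̄‖ < δ implies ‖R(x) − P(x)‖ ≤ ε · dist(x, M). In particular, there exist constants 0 < c ≤ C and δ > 0 such that c · dist(x, M) ≤ ‖x − R(x)‖ ≤ C · dist(x, M) whenever ‖x − x̄‖ < δ. -/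
/-!
`F := R - P` is `C¹` with `DF(x̄) = 0`, hence strictly differentiable at `x̄` with derivative
zero: `F y - F z = o(‖y - z‖)` as `(y, z) → (x̄, x̄)`. Take `y = x` and `z = P x`; since `P x ∈ M`,
both maps fix `P x`, so `F (P x) = 0` and `‖R x - P x‖ = o(‖x - P x‖) = o(dist(x, M))`. The
two-sided bound on `‖x - R x‖` then follows from the triangle inequality.
-/

open Filter Topology Asymptotics

theorem HasStrictFDerivAt.isLittleO_sub_comp_of_zero
    {E G : Type*} [NormedAddCommGroup E] [NormedSpace ℝ E] [NormedAddCommGroup G]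
    [NormedSpace ℝ G] {F : E → G} {a : E} (hF : HasStrictFDerivAt F (0 : E →L[ℝ] G) a)
    {g : E → E} (hg : Tendsto g (𝓝 a) (𝓝 a)) :
    (fun x => F x - F (g x)) =o[𝓝 a] fun x => x - g x := by
  have hstrict := hasStrictFDerivAt_iff_isLittleO.1 hF
  simp only [zero_apply, sub_zero] at hstrict
  exact hstrict.comp_tendsto (tendsto_id.prodMk_nhds hg)

theorem isLittleO_sub_of_fderiv_eq_of_comp_eq
    {E : Type*} [NormedAddCommGroup E] [NormedSpace ℝ E] {R P : E → E} {a : E}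
    (hR : ContDiffAt ℝ 1 R a) (hP : ContDiffAt ℝ 1 P a) (hDR : fderiv ℝ R a = fderiv ℝ P a)
    (hPa : P a = a) (hRP : ∀ᶠ x in 𝓝 a, R (P x) = P (P x)) :
    (fun x => R x - P x) =o[𝓝 a] fun x => x - P x := by
  have hF : HasStrictFDerivAt (fun x => R x - P x) (0 : E →L[ℝ] E) a := by
    have hsub := (hR.hasStrictFDerivAt one_ne_zero).sub (hP.hasStrictFDerivAt one_ne_zero)
    rwa [hDR, sub_self] at hsub
  have hPtendsto : Tendsto P (𝓝 a) (𝓝 a) := by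
    simpa [hPa] using hP.continuousAt.tendsto
  refine (hF.isLittleO_sub_comp_of_zero hPtendsto).congr' ?_ EventuallyEq.rfl
  filter_upwards [hRP] with x hx
  simp [hx]

theorem norm_sub_bounds_of_norm_sub_le {E : Type*} [SeminormedAddCommGroup E]
    {x p r : E} {d ε : ℝ} (hd : ‖x - p‖ = d) (hrp : ‖r - p‖ ≤ ε * d) :
    (1 - ε) * d ≤ ‖x - r‖ ∧ ‖x - r‖ ≤ (1 + ε) * d := by
  have hlower := norm_sub_norm_le (x - p) (r - p)
  have hupper := norm_add_le (x - p) (p - r)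
  rw [sub_sub_sub_cancel_right] at hlower
  rw [sub_add_sub_cancel, norm_sub_rev p r] at hupper
  constructor <;> linarith

theorem retraction_approx_projection_general
    {E : Type*} [NormedAddCommGroup E] [InnerProductSpace ℝ E]
    (M : Set E) (xb : E) (hxbM : xb ∈ M)
    (U : Set E) (hU : IsOpen U) (hxbU : xb ∈ U)
    (P : E → E) (hP : ContDiffOn ℝ 1 P U)
    (hPM : ∀ x ∈ U, P x ∈ M)
    (hPdist : ∀ x ∈ U, ‖x - P x‖ = Metric.infDist x M)
    (hPid : ∀ x ∈ M ∩ U, P x = x)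
    (R : E → E) (hR : ContDiffOn ℝ 1 R U)
    (hRid : ∀ x ∈ M ∩ U, R x = x)
    (hDR : fderiv ℝ R xb = fderiv ℝ P xb) :
    (∀ ε > (0 : ℝ), ∃ δ > (0 : ℝ), ∀ x, ‖x - xb‖ < δ →
        ‖R x - P x‖ ≤ ε * Metric.infDist x M) ∧
    ∃ c C δ : ℝ, 0 < c ∧ c ≤ C ∧ 0 < δ ∧
      ∀ x, ‖x - xb‖ < δ →
        c * Metric.infDist x M ≤ ‖x - R x‖ ∧ ‖x - R x‖ ≤ C * Metric.infDist x M := by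
  have hUnhds : U ∈ 𝓝 xb := hU.mem_nhds hxbU
  have hPxb : P xb = xb := hPid xb ⟨hxbM, hxbU⟩
  have hPU : ∀ᶠ x in 𝓝 xb, P x ∈ U :=
    (hP.contDiffAt hUnhds).continuousAt.preimage_mem_nhds (by rwa [hPxb])
  have hRP : ∀ᶠ x in 𝓝 xb, R (P x) = P (P x) := by
    filter_upwards [hUnhds, hPU] with x hxU hPxU
    rw [hRid _ ⟨hPM x hxU, hPxU⟩, hPid _ ⟨hPM x hxU, hPxU⟩]
  have hlittle := isLittleO_sub_of_fderiv_eq_of_comp_eq (hR.contDiffAt hUnhds)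
    (hP.contDiffAt hUnhds) hDR hPxb hRP
  have hsmall : ∀ ε > (0 : ℝ), ∃ δ > (0 : ℝ), ∀ x, ‖x - xb‖ < δ →
      ‖x - P x‖ = Metric.infDist x M ∧ ‖R x - P x‖ ≤ ε * Metric.infDist x M := by
    intro ε hε
    have hnear : ∀ᶠ x in 𝓝 xb,
        ‖x - P x‖ = Metric.infDist x M ∧ ‖R x - P x‖ ≤ ε * Metric.infDist x M := by
      filter_upwards [hlittle.def hε, hUnhds] with x hx hxU
      rw [← hPdist x hxU]
      exact ⟨rfl, hx⟩
    obtain ⟨δ, hδ, h⟩ := Metric.eventually_nhds_iff.1 hnear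
    exact ⟨δ, hδ, fun x hx => h (by rwa [dist_eq_norm])⟩
  refine ⟨fun ε hε => ?_, ?_⟩
  · obtain ⟨δ, hδ, h⟩ := hsmall ε hε
    exact ⟨δ, hδ, fun x hx => (h x hx).2⟩
  · obtain ⟨δ, hδ, h⟩ := hsmall (1 / 2) one_half_pos
    refine ⟨1 - 1 / 2, 1 + 1 / 2, δ, by norm_num, by norm_num, hδ, fun x hx => ?_⟩
    exact norm_sub_bounds_of_norm_sub_le (h x hx).1 (h x hx).2

/-- **Retractions as approximate projections.**
If `P` is a `C¹` nearest-point projection onto `M ⊆ E` on a neighborhood `U` of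
`xb ∈ M`, and `R` is a `C¹` map into `M` that restricts to the identity on `M ∩ U`
with `DR(xb) = DP(xb)`, then `‖R x − P x‖ = o(dist(x, M))` as `x → xb`; in particular
`‖x − R x‖ = Θ(dist(x, M))` near `xb`. -/
theorem retraction_approx_projection
    {E : Type*} [NormedAddCommGroup E] [InnerProductSpace ℝ E] [FiniteDimensional ℝ E]
    (M : Set E) (xb : E) (hxbM : xb ∈ M)
    (U : Set E) (hU : IsOpen U) (hxbU : xb ∈ U)
    (P : E → E) (hP : ContDiffOn ℝ 1 P U)
    (hPM : ∀ x ∈ U, P x ∈ M)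
    (hPdist : ∀ x ∈ U, ‖x - P x‖ = Metric.infDist x M)
    (hPid : ∀ x ∈ M ∩ U, P x = x)
    (R : E → E) (hR : ContDiffOn ℝ 1 R U)
    (hRM : ∀ x ∈ U, R x ∈ M)
    (hRid : ∀ x ∈ M ∩ U, R x = x)
    (hDR : fderiv ℝ R xb = fderiv ℝ P xb) :
    (∀ ε > (0 : ℝ), ∃ δ > (0 : ℝ), ∀ x, ‖x - xb‖ < δ →
        ‖R x - P x‖ ≤ ε * Metric.infDist x M) ∧
    ∃ c C δ : ℝ, 0 < c ∧ c ≤ C ∧ 0 < δ ∧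
      ∀ x, ‖x - xb‖ < δ →
        c * Metric.infDist x M ≤ ‖x - R x‖ ∧ ‖x - R x‖ ≤ C * Metric.infDist x M :=
  retraction_approx_projection_general M xb hxbM U hU hxbU P hP hPM hPdist hPid R hR hRid hDR
end

section
/- Let E be a finite-dimensional real inner product space, f : E → ℝ a function with minimal value f* attained on its set of minimizers S, and x̄ ∈ S. Let M ⊆ E, let U be a neighborhood of x̄, and let R : U → M be a map continuous at x̄ with R(x̄) = x̄ satisfying the ravine inequality f(x) − f(R(x)) ≥ C_lb · ‖x − R(x)‖² for all x ∈ U, for some constant C_lb > 0. Fix a real number p > 2, and suppose there exist δ > 0 and D_lb > 0 such that f(y) − f* ≥ D_lb · dist^p(y, S) for all y ∈ M with ‖y − x̄‖ < δ. Then there exist δ′ > 0 and D′_lb > 0 such that f(x) − f* ≥ D′_lb · dist^p(x, S) for all x with ‖x − x̄‖ < δ′. -/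
/-!
Let `x` be near `x̄` and `y = R x` its retraction onto the ravine. The ravine inequality pays
for the jump `‖x − y‖²`, which dominates `‖x − y‖^p` once `‖x − y‖ ≤ 1` because `p ≥ 2`;
the growth on `M` pays for `dist^p(y, S)`. Since `dist(x, S) ≤ ‖x − y‖ + dist(y, S)` and
`t ↦ t^p` is convex, `dist^p(x, S)` is at most `2^(p−1)` times the sum of these two terms.
-/

open Filter Metric Topology

theorem Real.rpow_add_le_mul_rpow_add_rpow {a b p : ℝ} (ha : 0 ≤ a) (hb : 0 ≤ b) (hp : 1 ≤ p) :
    (a + b) ^ p ≤ 2 ^ (p - 1) * (a ^ p + b ^ p) := by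
  lift a to NNReal using ha
  lift b to NNReal using hb
  exact_mod_cast NNReal.rpow_add_le_mul_rpow_add_rpow a b hp

theorem Metric.infDist_rpow_le {X : Type*} [PseudoMetricSpace X] (x y : X) (S : Set X)
    {p : ℝ} (hp : 1 ≤ p) :
    infDist x S ^ p ≤ 2 ^ (p - 1) * (dist x y ^ p + infDist y S ^ p) := by
  have htri : infDist x S ≤ dist x y + infDist y S := by
    linarith [infDist_le_infDist_add_dist (x := x) (y := y) (s := S)]
  calc infDist x S ^ p ≤ (dist x y + infDist y S) ^ p :=
        Real.rpow_le_rpow infDist_nonneg htri (by linarith)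
    _ ≤ 2 ^ (p - 1) * (dist x y ^ p + infDist y S ^ p) :=
        Real.rpow_add_le_mul_rpow_add_rpow dist_nonneg infDist_nonneg hp

theorem min_div_mul_infDist_rpow_le_of_ravine {X : Type*} [PseudoMetricSpace X]
    {f : X → ℝ} {S : Set X} {fstar C D p : ℝ} {x y : X}
    (hC : 0 ≤ C) (hD : 0 ≤ D) (hp : 2 ≤ p) (hxy : dist x y ≤ 1)
    (hrav : C * dist x y ^ 2 ≤ f x - f y) (hgrowth : D * infDist y S ^ p ≤ f y - fstar) :
    min C D / 2 ^ (p - 1) * infDist x S ^ p ≤ f x - fstar := by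
  set c := min C D
  have hjump : dist x y ^ p ≤ dist x y ^ 2 := by
    simpa using Real.rpow_le_rpow_of_exponent_ge' dist_nonneg hxy zero_le_two hp
  have hsum : c * (dist x y ^ p + infDist y S ^ p) ≤ f x - fstar :=
    calc c * (dist x y ^ p + infDist y S ^ p)
        = c * dist x y ^ p + c * infDist y S ^ p := mul_add _ _ _
      _ ≤ C * dist x y ^ 2 + D * infDist y S ^ p := by
        have hcC : c ≤ C := min_le_left _ _
        have hcD : c ≤ D := min_le_right _ _
        gcongr
        exact Real.rpow_nonneg infDist_nonneg p
      _ ≤ f x - fstar := by linarith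
  have h2p : (0 : ℝ) < 2 ^ (p - 1) := by positivity
  calc c / 2 ^ (p - 1) * infDist x S ^ p
      ≤ c / 2 ^ (p - 1) * (2 ^ (p - 1) * (dist x y ^ p + infDist y S ^ p)) := by
        have : 0 ≤ c := le_min hC hD
        gcongr
        exact infDist_rpow_le x y S (by linarith)
    _ = c * (dist x y ^ p + infDist y S ^ p) := by field_simp
    _ ≤ f x - fstar := hsum

theorem growth_extends_from_ravine_general
    {E : Type*} [NormedAddCommGroup E]
    (f : E → ℝ) (fstar : ℝ)
    (S : Set E) (xb : E)
    (M : Set E) (U : Set E) (hU : U ∈ nhds xb)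
    (R : E → E) (hRM : ∀ x ∈ U, R x ∈ M)
    (hRc : ContinuousAt R xb) (hRxb : R xb = xb)
    (Clb : ℝ) (hClb : 0 < Clb)
    (hrav : ∀ x ∈ U, Clb * ‖x - R x‖ ^ 2 ≤ f x - f (R x))
    (p : ℝ) (hp : 2 < p)
    (δ Dlb : ℝ) (hδ : 0 < δ) (hDlb : 0 < Dlb)
    (hgrowth : ∀ y ∈ M, ‖y - xb‖ < δ → Dlb * Metric.infDist y S ^ p ≤ f y - fstar) :
    ∃ δ' Dlb' : ℝ, 0 < δ' ∧ 0 < Dlb' ∧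
      ∀ x, ‖x - xb‖ < δ' → Dlb' * Metric.infDist x S ^ p ≤ f x - fstar := by
  have hRx : Tendsto R (𝓝 xb) (𝓝 xb) := by
    simpa only [ContinuousAt, hRxb] using hRc
  have hjump : Tendsto (fun x ↦ ‖x - R x‖) (𝓝 xb) (𝓝 0) := by
    simpa [hRxb] using (continuousAt_id.sub hRc).norm.tendsto
  have hnear : ∀ᶠ x in 𝓝 xb, x ∈ U ∧ R x ∈ ball xb δ ∧ ‖x - R x‖ ≤ 1 :=
    (show ∀ᶠ x in 𝓝 xb, x ∈ U from hU).and ((hRx.eventually (ball_mem_nhds xb hδ)).and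
      (hjump.eventually (ge_mem_nhds zero_lt_one)))
  obtain ⟨δ', hδ', hball⟩ := Metric.eventually_nhds_iff.1 hnear
  refine ⟨δ', min Clb Dlb / 2 ^ (p - 1), hδ', by positivity, fun x hx ↦ ?_⟩
  obtain ⟨hxU, hRxδ, hxR⟩ := hball (by rwa [dist_eq_norm])
  rw [mem_ball, dist_eq_norm] at hRxδ
  exact min_div_mul_infDist_rpow_le_of_ravine hClb.le hDlb.le hp.le
    (by rwa [dist_eq_norm]) (by rw [dist_eq_norm]; exact hrav x hxU)
    (hgrowth (R x) (hRM x hxU) hRxδ)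

/-- **Extending growth from the ravine.**
Suppose `f : E → ℝ` has minimal value `fstar`, attained exactly on `S`, and that `f`
admits a ravine `M` at `xb ∈ S` with retraction `R` (continuous at `xb`, `R xb = xb`,
`f x − f (R x) ≥ Clb‖x − R x‖²` on a neighborhood `U`).  If `f` grows like
`dist^p(·, S)` (`p > 2`) on `M` near `xb`, then it grows like `dist^p(·, S)` on a
full neighborhood of `xb`. -/
theorem growth_extends_from_ravine
    {E : Type*} [NormedAddCommGroup E] [InnerProductSpace ℝ E] [FiniteDimensional ℝ E]
    (f : E → ℝ) (fstar : ℝ) (hmin : ∀ x, fstar ≤ f x)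
    (S : Set E) (hS : S = {x | f x = fstar}) (xb : E) (hxb : xb ∈ S)
    (M : Set E) (U : Set E) (hU : U ∈ nhds xb)
    (R : E → E) (hRM : ∀ x ∈ U, R x ∈ M)
    (hRc : ContinuousAt R xb) (hRxb : R xb = xb)
    (Clb : ℝ) (hClb : 0 < Clb)
    (hrav : ∀ x ∈ U, Clb * ‖x - R x‖ ^ 2 ≤ f x - f (R x))
    (p : ℝ) (hp : 2 < p)
    (δ Dlb : ℝ) (hδ : 0 < δ) (hDlb : 0 < Dlb)
    (hgrowth : ∀ y ∈ M, ‖y - xb‖ < δ → Dlb * Metric.infDist y S ^ p ≤ f y - fstar) :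
    ∃ δ' Dlb' : ℝ, 0 < δ' ∧ 0 < Dlb' ∧
      ∀ x, ‖x - xb‖ < δ' → Dlb' * Metric.infDist x S ^ p ≤ f x - fstar :=
  growth_extends_from_ravine_general f fstar S xb M U hU R hRM hRc hRxb Clb hClb hrav p hp δ Dlb hδ
    hDlb hgrowth
end

section
/- Let E be a finite-dimensional real inner product space, M ⊆ E a closed set, x̄ ∈ M, and U an open neighborhood of x̄. Let f : E → ℝ be C²-smooth with ∇f Lipschitz continuous on U. Assume that the squared distance function φ(x) := dist(x, M)² is differentiable on U with ∇φ Lipschitz continuous on U and ‖∇φ(x)‖ = 2 · dist(x, M) for x ∈ U. Let R : U → E be C²-smooth with R(x) ∈ M for all x ∈ U, and suppose there are constants 0 < c₁ ≤ c₂ with c₁ · dist²(x, M) ≤ f(x) − f(R(x)) ≤ c₂ · dist²(x, M) for all x ∈ U. Then there exist C > 0 and δ > 0 such that ‖∇f(x) − ∇(f ∘ R)(x)‖ ≤ C · dist(x, M) for all x with ‖x − x̄‖ < δ. -/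
/-!
Put `g := f - f ∘ R`. The ravine inequalities give `0 ≤ g ≤ c₂ dist²(·, M)` near `xb` and
`g xb = 0`, so `xb` is a local minimum of `g`. A nonnegative function whose gradient is
`K`-Lipschitz satisfies `‖∇g x‖² ≤ 4K g x`: one gradient step of length `(2K)⁻¹` lowers `g` by
`‖∇g x‖² / (4K)` and cannot make it negative. Since `g` is `C²`, its gradient is locally
Lipschitz, hence `‖∇f x - ∇(f ∘ R) x‖ = ‖∇g x‖ ≤ √(4K c₂) dist(x, M)` near `xb`.
-/

open InnerProductSpace Metric Filter Topology
open scoped NNReal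

theorem Real.le_sqrt_mul_mul_of_sq_le {n C c a d : ℝ} (hn : 0 ≤ n) (hC : 0 ≤ C) (hd : 0 ≤ d)
    (hna : n ^ 2 ≤ C * a) (ha : a ≤ c * d ^ 2) : n ≤ √(C * c) * d := by
  rw [← Real.sqrt_sq hn, ← Real.sqrt_sq hd, ← Real.sqrt_mul' _ (sq_nonneg d)]
  exact Real.sqrt_le_sqrt (hna.trans (by rw [mul_assoc]; gcongr))

theorem sub_smul_mem_ball {F : Type*} [SeminormedAddCommGroup F] [NormedSpace ℝ F]
    {x x₀ v : F} {ε L : ℝ} (hL : 0 < L) (hx : x ∈ ball x₀ (ε / 2)) (hv : ‖v‖ ≤ L * (ε / 2)) :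
    x - (2 * L)⁻¹ • v ∈ ball x₀ ε := by
  rw [mem_ball, dist_eq_norm, sub_right_comm]
  calc ‖x - x₀ - (2 * L)⁻¹ • v‖ ≤ ‖x - x₀‖ + (2 * L)⁻¹ * ‖v‖ := by
        refine (norm_sub_le _ _).trans_eq ?_
        rw [norm_smul, Real.norm_of_nonneg (by positivity)]
    _ < ε / 2 + (2 * L)⁻¹ * (L * (ε / 2)) := by
        rw [← dist_eq_norm]
        exact add_lt_add_of_lt_of_le (mem_ball.1 hx) (by gcongr)
    _ = 3 / 4 * ε := by field_simp; ring
    _ < ε := by linarith [(dist_nonneg.trans_lt (mem_ball.1 hx) : 0 < ε / 2)]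

section

variable {E : Type*} [NormedAddCommGroup E] [InnerProductSpace ℝ E] [CompleteSpace E]

theorem norm_fderiv_sub_fderiv_eq_norm_gradient_sub_gradient (g : E → ℝ) (x y : E) :
    ‖fderiv ℝ g x - fderiv ℝ g y‖ = ‖gradient g x - gradient g y‖ := by
  rw [gradient, gradient, ← map_sub, LinearIsometryEquiv.norm_map]

theorem gradient_sub {f g : E → ℝ} {x : E} (hf : DifferentiableAt ℝ f x)
    (hg : DifferentiableAt ℝ g x) :
    gradient (fun y => f y - g y) x = gradient f x - gradient g x := by
  rw [gradient, gradient, gradient, fderiv_fun_sub hf hg, map_sub]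

theorem Convex.image_le_add_inner_gradient_add_mul_norm_sq {g : E → ℝ} {s : Set E} {K : ℝ≥0}
    (hs : Convex ℝ s) (hg : ∀ z ∈ s, DifferentiableAt ℝ g z)
    (hK : LipschitzOnWith K (gradient g) s) {x y : E} (hx : x ∈ s) (hy : y ∈ s) :
    g y ≤ g x + ⟪gradient g x, y - x⟫_ℝ + K * ‖y - x‖ ^ 2 := by
  have hseg : segment ℝ x y ⊆ s := hs.segment_subset hx hy
  have hbound : ∀ z ∈ segment ℝ x y, ‖fderiv ℝ g z - fderiv ℝ g x‖ ≤ K * ‖y - x‖ := by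
    intro z hz
    rw [norm_fderiv_sub_fderiv_eq_norm_gradient_sub_gradient, ← dist_eq_norm]
    calc dist (gradient g z) (gradient g x) ≤ K * dist z x :=
          hK.dist_le_mul z (hseg hz) x hx
      _ ≤ K * ‖y - x‖ := by
          rw [dist_eq_norm]; gcongr; exact norm_sub_le_of_mem_segment hz
  have hmvt := (convex_segment x y).norm_image_sub_le_of_norm_hasFDerivWithin_le'
    (fun z hz => (hg z (hseg hz)).hasFDerivAt.hasFDerivWithinAt) hbound
    (left_mem_segment ℝ x y) (right_mem_segment ℝ x y)
  rw [Real.norm_eq_abs, ← inner_gradient_left] at hmvt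
  linarith [(abs_le.1 hmvt).2]

theorem norm_gradient_sq_le_of_nonneg {g : E → ℝ} {s : Set E} {K : ℝ≥0} (hK₀ : 0 < K)
    (hs : Convex ℝ s) (hg : ∀ z ∈ s, DifferentiableAt ℝ g z)
    (hK : LipschitzOnWith K (gradient g) s) (hnonneg : ∀ z ∈ s, 0 ≤ g z) {x : E} (hx : x ∈ s)
    (hstep : x - (2 * K : ℝ)⁻¹ • gradient g x ∈ s) :
    ‖gradient g x‖ ^ 2 ≤ 4 * K * g x := by
  set v := gradient g x
  set τ : ℝ := (2 * K)⁻¹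
  have hτ : 0 < τ := by positivity
  have hKτ : (K : ℝ) * τ = 1 / 2 := by simp only [τ]; field_simp
  have hdescent := hs.image_le_add_inner_gradient_add_mul_norm_sq hg hK hx hstep
  rw [sub_sub_cancel_left, inner_neg_right, real_inner_smul_right, real_inner_self_eq_norm_sq,
    norm_neg, norm_smul, Real.norm_of_nonneg hτ.le] at hdescent
  have hdrop : τ * ‖v‖ ^ 2 ≤ 2 * g x := by nlinarith [hnonneg _ hstep]
  calc ‖v‖ ^ 2 = 2 * K * (τ * ‖v‖ ^ 2) := by rw [← mul_assoc, mul_assoc 2, hKτ]; ring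
    _ ≤ 2 * K * (2 * g x) := by gcongr
    _ = 4 * K * g x := by ring

theorem ContDiffAt.exists_lipschitzOnWith_gradient {g : E → ℝ} {x₀ : E}
    (hg : ContDiffAt ℝ 2 g x₀) : ∃ K : ℝ≥0, ∃ t ∈ 𝓝 x₀, LipschitzOnWith K (gradient g) t :=
  ((toDual ℝ E).symm.contDiff.contDiffAt.comp x₀
    (hg.fderiv_right (m := 1) le_rfl)).exists_lipschitzOnWith

theorem IsLocalMin.gradient_eq_zero {g : E → ℝ} {x₀ : E} (h : IsLocalMin g x₀) :
    gradient g x₀ = 0 := by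
  rw [gradient, h.fderiv_eq_zero, map_zero]

theorem eventually_norm_gradient_sq_le_of_nonneg {g : E → ℝ} {x₀ : E} (hg : ContDiffAt ℝ 2 g x₀)
    (hnonneg : ∀ᶠ x in 𝓝 x₀, 0 ≤ g x) (hx₀ : g x₀ = 0) :
    ∃ C > 0, ∀ᶠ x in 𝓝 x₀, ‖gradient g x‖ ^ 2 ≤ C * g x := by
  obtain ⟨K, t, ht, hK⟩ := hg.exists_lipschitzOnWith_gradient
  have hdiff : ∀ᶠ x in 𝓝 x₀, DifferentiableAt ℝ g x :=
    (hg.eventually (by simp)).mono fun x hx => hx.differentiableAt (by norm_num)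
  have hgrad₀ : gradient g x₀ = 0 :=
    IsLocalMin.gradient_eq_zero (hnonneg.mono fun x hx => hx₀ ▸ hx)
  obtain ⟨ε, hε, hball⟩ := Metric.mem_nhds_iff.1 (inter_mem ht (hdiff.and hnonneg))
  -- `K + 1` rather than `K`, so that the gradient step below has finite length.
  set L : ℝ≥0 := K + 1
  have hL : 0 < L := by positivity
  have hLip : LipschitzOnWith L (gradient g) (ball x₀ ε) :=
    (hK.mono fun x hx => (hball hx).1).weaken le_self_add
  refine ⟨4 * L, by positivity, eventually_of_mem (ball_mem_nhds x₀ (half_pos hε)) ?_⟩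
  intro x hx
  have hxε : x ∈ ball x₀ ε := ball_subset_ball (half_le_self hε.le) hx
  refine norm_gradient_sq_le_of_nonneg hL (convex_ball x₀ ε) (fun z hz => (hball hz).2.1) hLip
    (fun z hz => (hball hz).2.2) hxε ?_
  have hgradx : ‖gradient g x‖ ≤ L * (ε / 2) := by
    have := hLip.dist_le_mul x hxε x₀ (mem_ball_self hε)
    rw [hgrad₀, dist_zero_right] at this
    exact this.trans (by gcongr; exact (mem_ball.1 hx).le)
  exact sub_smul_mem_ball hL hx hgradx

end

theorem gradient_control_general
    {E : Type*} [NormedAddCommGroup E] [InnerProductSpace ℝ E] [FiniteDimensional ℝ E]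
    (M : Set E) (xb : E) (hxbM : xb ∈ M)
    (U : Set E) (hU : IsOpen U) (hxbU : xb ∈ U)
    (f : E → ℝ) (hf : ContDiff ℝ 2 f)
    (R : E → E) (hR : ContDiffOn ℝ 2 R U)
    (c₁ c₂ : ℝ) (hc₁ : 0 < c₁) (hc₁₂ : c₁ ≤ c₂)
    (hrav : ∀ x ∈ U, c₁ * Metric.infDist x M ^ 2 ≤ f x - f (R x) ∧
      f x - f (R x) ≤ c₂ * Metric.infDist x M ^ 2) :
    ∃ C > (0 : ℝ), ∃ δ > (0 : ℝ), ∀ x, ‖x - xb‖ < δ →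
      ‖gradient f x - gradient (f ∘ R) x‖ ≤ C * Metric.infDist x M := by
  have hUxb : U ∈ 𝓝 xb := hU.mem_nhds hxbU
  have hfR : ContDiffAt ℝ 2 (f ∘ R) xb := hf.contDiffAt.comp xb (hR.contDiffAt hUxb)
  have hgxb : f xb - f (R xb) = 0 := by
    have := hrav xb hxbU
    rw [infDist_zero_of_mem hxbM] at this
    linarith
  obtain ⟨C, hC, hbound⟩ := eventually_norm_gradient_sq_le_of_nonneg (hf.contDiffAt.sub hfR)
    (eventually_of_mem hUxb fun x hx => le_trans (by positivity) (hrav x hx).1) hgxb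
  have hgrad : ∀ᶠ x in 𝓝 xb,
      gradient (fun y => f y - f (R y)) x = gradient f x - gradient (f ∘ R) x := by
    filter_upwards [hfR.eventually (by simp)] with x hx
    exact gradient_sub (hf.differentiable (by norm_num) x) (hx.differentiableAt (by norm_num))
  obtain ⟨δ, hδ, hball⟩ := Metric.eventually_nhds_iff.1 (hbound.and (hgrad.and hUxb))
  refine ⟨√(C * c₂), by have := hc₁.trans_le hc₁₂; positivity, δ, hδ, fun x hx => ?_⟩
  obtain ⟨hbx, hgx, hxU⟩ := hball (by rwa [dist_eq_norm])
  rw [← hgx]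
  exact Real.le_sqrt_mul_mul_of_sq_le (norm_nonneg _) hC.le infDist_nonneg hbx (hrav x hxU).2

/-- **Gradient control near a ravine.**
Let `M ⊆ E` be closed, `xb ∈ M`, `U` an open neighborhood of `xb`, and `f : E → ℝ`
`C²`-smooth with `∇f` Lipschitz on `U`.  Assume the squared distance
`φ(x) = dist²(x, M)` is differentiable on `U` with `∇φ` Lipschitz on `U` and
`‖∇φ(x)‖ = 2 dist(x, M)`.  If `R : U → M` is `C²` and
`c₁ dist²(x,M) ≤ f x − f (R x) ≤ c₂ dist²(x,M)` on `U`, then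
`‖∇f(x) − ∇(f ∘ R)(x)‖ ≤ C · dist(x, M)` near `xb`. -/
theorem gradient_control
    {E : Type*} [NormedAddCommGroup E] [InnerProductSpace ℝ E] [FiniteDimensional ℝ E]
    (M : Set E) (hM : IsClosed M) (xb : E) (hxbM : xb ∈ M)
    (U : Set E) (hU : IsOpen U) (hxbU : xb ∈ U)
    (f : E → ℝ) (hf : ContDiff ℝ 2 f)
    (Lf : NNReal) (hfLip : LipschitzOnWith Lf (gradient f) U)
    (hφdiff : ∀ x ∈ U, DifferentiableAt ℝ (fun y => Metric.infDist y M ^ 2) x)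
    (Lφ : NNReal)
    (hφLip : LipschitzOnWith Lφ (gradient (fun y => Metric.infDist y M ^ 2)) U)
    (hφgrad : ∀ x ∈ U,
      ‖gradient (fun y => Metric.infDist y M ^ 2) x‖ = 2 * Metric.infDist x M)
    (R : E → E) (hR : ContDiffOn ℝ 2 R U) (hRM : ∀ x ∈ U, R x ∈ M)
    (c₁ c₂ : ℝ) (hc₁ : 0 < c₁) (hc₁₂ : c₁ ≤ c₂)
    (hrav : ∀ x ∈ U, c₁ * Metric.infDist x M ^ 2 ≤ f x - f (R x) ∧
      f x - f (R x) ≤ c₂ * Metric.infDist x M ^ 2) :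
    ∃ C > (0 : ℝ), ∃ δ > (0 : ℝ), ∀ x, ‖x - xb‖ < δ →
      ‖gradient f x - gradient (f ∘ R) x‖ ≤ C * Metric.infDist x M :=
  gradient_control_general M xb hxbM U hU hxbU f hf R hR c₁ c₂ hc₁ hc₁₂ hrav
end

section
/- Let E be a finite-dimensional real inner product space, and let f : E → ℝ be C²-smooth with a local minimizer x̄. Let U be a neighborhood of x̄ and let R : U → E be a map continuous at x̄ with R(x̄) = x̄ such that f(x) − f(R(x)) ≥ C_lb · ‖x − R(x)‖² for all x ∈ U, for some constant C_lb > 0. Then for every constant C_a with 0 < C_a < C_lb there exists δ > 0 such that ⟨∇f(x), x − R(x)⟩ ≥ C_a · ‖x − R(x)‖² for all x with ‖x − x̄‖ < δ. -/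
/-!
Put `v = R x - x`. By the mean value theorem, `f (R x) - f x - Df(x) v = (Df(z) - Df(x)) v` for some
`z = x + c v` on the segment, and strict differentiability of `Df` at `x̄` turns this into
`c ⟪D²f(x̄) v, v⟫` up to an error `c ε ‖v‖²`, uniformly for `x`, `R x` near `x̄`. At a local
minimizer `D²f(x̄)` is positive semidefinite (the same estimate at `x = x̄`, where `Df(x̄) = 0`), so
`f (R x) - f x - Df(x) v ≥ -ε ‖v‖²`. Combined with the ravine inequality this gives
`⟪∇f(x), x - R x⟫ = -Df(x) v ≥ (C_lb - ε) ‖v‖²`; take `ε = C_lb - C_a`.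
-/

open scoped RealInnerProductSpace
open Set Filter Topology Metric

section Taylor

variable {E : Type*} [NormedAddCommGroup E] [NormedSpace ℝ E] {f : E → ℝ}
  {H : E →L[ℝ] E →L[ℝ] ℝ} {x₀ : E}

theorem exists_mem_Ioo_sub_sub_fderiv_eq (hf : Differentiable ℝ f) (x v : E) :
    ∃ c ∈ Ioo (0 : ℝ) 1,
      f (x + v) - f x - fderiv ℝ f x v = (fderiv ℝ f (x + c • v) - fderiv ℝ f x) v := by
  have hline : ∀ t : ℝ, HasDerivAt (fun s : ℝ => x + s • v) v t := fun t => by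
    simpa using ((hasDerivAt_id t).smul_const v).const_add x
  have hg : ∀ t : ℝ, HasDerivAt (fun s : ℝ => f (x + s • v) - s * fderiv ℝ f x v)
      ((fderiv ℝ f (x + t • v) - fderiv ℝ f x) v) t := fun t =>
    ((hf _).hasFDerivAt.comp_hasDerivAt t (hline t)).sub (hasDerivAt_mul_const _)
  obtain ⟨c, hc, hslope⟩ := exists_hasDerivAt_eq_slope _ _ one_pos
    (fun t _ => (hg t).continuousAt.continuousWithinAt) (fun t _ => hg t)
  refine ⟨c, hc, ?_⟩
  rw [hslope]
  simp
  ring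

/-- `c` is the mean-value parameter; keeping it as a factor of the error bound is what lets it be
divided out at a critical point. -/
theorem HasStrictFDerivAt.exists_abs_taylor_remainder_le
    (hH : HasStrictFDerivAt (fderiv ℝ f) H x₀) (hf : Differentiable ℝ f) {ε : ℝ} (hε : 0 < ε) :
    ∃ r > 0, ∀ x ∈ ball x₀ r, ∀ v, x + v ∈ ball x₀ r → ∃ c ∈ Ioo (0 : ℝ) 1,
      |f (x + v) - f x - fderiv ℝ f x v - c * H v v| ≤ c * (ε * ‖v‖ ^ 2) := by
  obtain ⟨r, hr, hball⟩ := eventually_nhds_iff_ball.1 (hH.isLittleO.def hε)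
  refine ⟨r, hr, fun x hx v hxv => ?_⟩
  obtain ⟨c, hc, hmvt⟩ := exists_mem_Ioo_sub_sub_fderiv_eq hf x v
  have hz : x + c • v ∈ ball x₀ r :=
    (convex_ball x₀ r).add_smul_mem hx hxv ⟨hc.1.le, hc.2.le⟩
  have hlin := hball (x + c • v, x) (by rw [← ball_prod_same]; exact ⟨hz, hx⟩)
  simp only [add_sub_cancel_left, norm_smul, Real.norm_of_nonneg hc.1.le] at hlin
  refine ⟨c, hc, ?_⟩
  calc |f (x + v) - f x - fderiv ℝ f x v - c * H v v|
      = |(fderiv ℝ f (x + c • v) - fderiv ℝ f x - H (c • v)) v| := by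
        rw [hmvt]; simp
    _ ≤ ‖fderiv ℝ f (x + c • v) - fderiv ℝ f x - H (c • v)‖ * ‖v‖ := by
        simpa only [Real.norm_eq_abs] using
          (fderiv ℝ f (x + c • v) - fderiv ℝ f x - H (c • v)).le_opNorm v
    _ ≤ ε * (c * ‖v‖) * ‖v‖ := by gcongr
    _ = c * (ε * ‖v‖ ^ 2) := by ring

theorem IsLocalMin.hessian_apply_self_nonneg (hmin : IsLocalMin f x₀) (hf : Differentiable ℝ f)
    (hH : HasStrictFDerivAt (fderiv ℝ f) H x₀) (w : E) : 0 ≤ H w w := by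
  have hbound : ∀ ε > 0, -(ε * ‖w‖ ^ 2) ≤ H w w := by
    intro ε hε
    obtain ⟨r, hr, hrem⟩ := hH.exists_abs_taylor_remainder_le hf hε
    have hline : Tendsto (fun t : ℝ => x₀ + t • w) (𝓝[>] 0) (𝓝 x₀) :=
      ((continuous_const.add (continuous_id.smul continuous_const)).tendsto' 0 x₀
        (by simp)).mono_left nhdsWithin_le_nhds
    obtain ⟨t, ⟨hmin_t, hball_t⟩, ht⟩ :=
      ((hline.eventually (hmin.and (ball_mem_nhds x₀ hr))).and self_mem_nhdsWithin).exists
    obtain ⟨c, hc, hcle⟩ := hrem x₀ (mem_ball_self hr) (t • w) hball_t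
    simp only [hmin.fderiv_eq_zero, zero_apply, map_smul, smul_apply, smul_eq_mul, norm_smul,
      Real.norm_eq_abs] at hcle
    have hupper := (abs_le.1 hcle).2
    rw [mul_pow, sq_abs] at hupper
    nlinarith [mul_pos hc.1 (pow_pos ht 2)]
  exact le_of_tendsto (((continuous_id.mul continuous_const).neg.tendsto' 0 0 (by simp)).mono_left
    nhdsWithin_le_nhds) (eventually_nhdsWithin_of_forall (s := Ioi 0) hbound)

theorem IsLocalMin.eventually_neg_mul_sq_le_sub_sub_fderiv (hmin : IsLocalMin f x₀)
    (hf : Differentiable ℝ f) (hH : HasStrictFDerivAt (fderiv ℝ f) H x₀) {ε : ℝ} (hε : 0 < ε) :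
    ∀ᶠ p : E × E in 𝓝 (x₀, x₀),
      -(ε * ‖p.2 - p.1‖ ^ 2) ≤ f p.2 - f p.1 - fderiv ℝ f p.1 (p.2 - p.1) := by
  obtain ⟨r, hr, hrem⟩ := hH.exists_abs_taylor_remainder_le hf hε
  filter_upwards [prod_mem_nhds (ball_mem_nhds x₀ hr) (ball_mem_nhds x₀ hr)]
  rintro ⟨x, y⟩ ⟨hx, hy⟩
  dsimp only
  obtain ⟨c, hc, hcle⟩ := hrem x hx (y - x) (by rwa [add_sub_cancel])
  rw [add_sub_cancel] at hcle
  have hHess := hmin.hessian_apply_self_nonneg hf hH (y - x)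
  nlinarith [(abs_le.1 hcle).1, mul_nonneg hc.1.le hHess,
    mul_nonneg (sub_nonneg.2 hc.2.le) (mul_nonneg hε.le (sq_nonneg ‖y - x‖))]

end Taylor

theorem aiming_toward_ravine_general
    {E : Type*} [NormedAddCommGroup E] [InnerProductSpace ℝ E] [FiniteDimensional ℝ E]
    (f : E → ℝ) (hf : ContDiff ℝ 2 f) (xb : E) (hmin : IsLocalMin f xb)
    (U : Set E) (hU : U ∈ nhds xb)
    (R : E → E) (hRc : ContinuousAt R xb) (hRxb : R xb = xb)
    (Clb : ℝ)
    (hrav : ∀ x ∈ U, Clb * ‖x - R x‖ ^ 2 ≤ f x - f (R x)) :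
    ∀ Ca : ℝ, 0 < Ca → Ca < Clb →
      ∃ δ > (0 : ℝ), ∀ x, ‖x - xb‖ < δ →
        Ca * ‖x - R x‖ ^ 2 ≤ ⟪gradient f x, x - R x⟫ := by
  intro Ca _ hCa
  have hstrict : HasStrictFDerivAt (fderiv ℝ f) (fderiv ℝ (fderiv ℝ f) xb) xb :=
    (hf.fderiv_right (m := 1) le_rfl).contDiffAt.hasStrictFDerivAt one_ne_zero
  have hpair : Tendsto (fun x => (x, R x)) (𝓝 xb) (𝓝 (xb, xb)) :=
    tendsto_id.prodMk_nhds (by simpa only [hRxb] using hRc.tendsto)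
  obtain ⟨δ, hδ, hnear⟩ := eventually_nhds_iff_ball.1 <| (hpair.eventually <|
    hmin.eventually_neg_mul_sq_le_sub_sub_fderiv (hf.differentiable two_ne_zero) hstrict
      (sub_pos.2 hCa)).and hU
  refine ⟨δ, hδ, fun x hx => ?_⟩
  obtain ⟨hrem, hxU⟩ := hnear x (mem_ball_iff_norm.2 hx)
  have hgrad : ⟪gradient f x, x - R x⟫ = -fderiv ℝ f x (R x - x) := by
    rw [inner_gradient_left, ← map_neg, neg_sub]
  dsimp only at hrem
  rw [norm_sub_rev] at hrem
  rw [hgrad]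
  linarith [hrav x hxU]

/-- **Aiming towards the ravine.**
Let `f : E → ℝ` be `C²`-smooth with a local minimizer `xb`, and let `R` be a map
continuous at `xb` with `R xb = xb` satisfying the ravine inequality
`f x − f (R x) ≥ Clb‖x − R x‖²` on a neighborhood `U` of `xb`.  Then for every
`0 < Ca < Clb` there is `δ > 0` such that
`⟨∇f(x), x − R x⟩ ≥ Ca‖x − R x‖²` whenever `‖x − xb‖ < δ`. -/
theorem aiming_toward_ravine
    {E : Type*} [NormedAddCommGroup E] [InnerProductSpace ℝ E] [FiniteDimensional ℝ E]
    (f : E → ℝ) (hf : ContDiff ℝ 2 f) (xb : E) (hmin : IsLocalMin f xb)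
    (U : Set E) (hU : U ∈ nhds xb)
    (R : E → E) (hRc : ContinuousAt R xb) (hRxb : R xb = xb)
    (Clb : ℝ) (hClb : 0 < Clb)
    (hrav : ∀ x ∈ U, Clb * ‖x - R x‖ ^ 2 ≤ f x - f (R x)) :
    ∀ Ca : ℝ, 0 < Ca → Ca < Clb →
      ∃ δ > (0 : ℝ), ∀ x, ‖x - xb‖ < δ →
        Ca * ‖x - R x‖ ^ 2 ≤ ⟪gradient f x, x - R x⟫ :=
  aiming_toward_ravine_general f hf xb hmin U hU R hRc hRxb Clb hrav
end

section
/- Let E be a finite-dimensional real inner product space, let p ≥ 2 be an integer, and let g : E → ℝ be C^{p+1}-smooth. Let S be a nonempty closed subset of the set of minimizers of g (so g equals its infimum, inf g, on S), fix x̄ ∈ S, and suppose there exist a neighborhood U of x̄ and a constant C > 0 such that g(x) − inf g ≤ C · dist^p(x, S) for all x ∈ U. Then: (1) there exist a neighborhood U′ of x̄ and C′ > 0 such that ‖∇g(x)‖ ≤ C′ · dist^{p−1}(x, S) for all x ∈ U′; and (2) there exist a neighborhood U″ of x̄ and C″ > 0 such that for every x ∈ U″ and every nearest point x̂ of x in S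 (i.e. x̂ ∈ S with ‖x − x̂‖ = dist(x, S)): |g(x) − inf g − (1/p)⟨∇g(x), x − x̂⟩| ≤ C″ · dist^{p+1}(x, S). -/
/-!
Restrict `f = g - gmin` to segments. On a segment of length `r = dist(x, S)` starting at `x` or at
a nearest point of `S`, the restriction is a one-variable `C^{p+1}` function squeezed between `0`
and `O(r^p)` whose `(p+1)`-st derivative is `O(r^{p+1})`. A polynomial of degree `p` is controlled
by its values at `p + 1` fixed nodes (a Vandermonde system), so its Taylor coefficients at `0` are
`O(r^p)`. In the gradient direction the first coefficient is `r ‖∇g(x)‖`, which gives (1). On the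
segment `t ↦ x̂ + t (x - x̂)` the bound `O(t^p)` forces all coefficients of order `< p` to vanish,
so `ψ(1)` and `ψ'(1)` equal `c/p!` and `c/(p-1)!` up to `O(r^{p+1})`, where `c = ψ^{(p)}(0)`;
the combination `ψ(1) - ψ'(1)/p` cancels `c`, which gives (2).
-/

open Set Metric Filter
open scoped Nat RealInnerProductSpace Topology

theorem abs_sub_taylor_sum_le {n : ℕ} {f : ℝ → ℝ} (hf : ContDiff ℝ (n + 1) f) {M τ t : ℝ}
    (hτ : 0 < τ) (ht : t ∈ Icc 0 τ) (hM : ∀ y ∈ Icc 0 τ, |iteratedDeriv (n + 1) f y| ≤ M) :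
    |f t - ∑ k ∈ Finset.range (n + 1), iteratedDeriv k f 0 / k ! * t ^ k|
      ≤ M * t ^ (n + 1) / n ! := by
  have hI : UniqueDiffOn ℝ (Icc 0 τ) := uniqueDiffOn_Icc hτ
  have hwithin : ∀ k ≤ n + 1, ∀ y ∈ Icc 0 τ,
      iteratedDerivWithin k f (Icc 0 τ) y = iteratedDeriv k f y := fun k hk y hy =>
    iteratedDerivWithin_eq_iteratedDeriv hI (hf.contDiffAt.of_le (by exact_mod_cast hk)) hy
  have h0 : (0 : ℝ) ∈ Icc 0 τ := ⟨le_rfl, hτ.le⟩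
  have hbound := taylor_mean_remainder_bound hτ.le hf.contDiffOn ht fun y hy => by
    rw [hwithin _ le_rfl y hy, Real.norm_eq_abs]; exact hM y hy
  rw [taylor_within_apply, Real.norm_eq_abs, sub_zero] at hbound
  convert hbound using 4 with k hk
  rw [hwithin k (Finset.mem_range.mp hk).le 0 h0, smul_eq_mul]
  ring

theorem exists_abs_le_mul_of_abs_sum_mul_pow_le {n : ℕ} {v : Fin (n + 1) → ℝ}
    (hv : Function.Injective v) :
    ∃ D > 0, ∀ (b : Fin (n + 1) → ℝ) (A : ℝ),
      (∀ j, |∑ i, b i * v j ^ (i : ℕ)| ≤ A) → ∀ k, |b k| ≤ D * A := by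
  let V := (Matrix.vandermonde v).mulVecLin
  have hV : Function.Injective V := Matrix.mulVec_injective_iff_isUnit.mpr
    (Matrix.isUnit_iff_isUnit_det _ |>.mpr (Matrix.det_vandermonde_ne_zero_iff.mpr hv).isUnit)
  obtain ⟨K, -, hK⟩ := V.injective_iff_antilipschitz.mp hV
  refine ⟨K + 1, by positivity, fun b A hA k => ?_⟩
  have hA0 : 0 ≤ A := (abs_nonneg _).trans (hA 0)
  have hVb : ‖V b‖ ≤ A := by
    refine (pi_norm_le_iff_of_nonneg hA0).mpr fun j => ?_
    simpa [V, Matrix.mulVec, dotProduct, Matrix.vandermonde_apply, mul_comm] using hA j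
  calc |b k| = ‖b k‖ := (Real.norm_eq_abs _).symm
    _ ≤ ‖b‖ := norm_le_pi_norm b k
    _ ≤ K * ‖V b‖ := ZeroHomClass.bound_of_antilipschitz V hK b
    _ ≤ (K + 1) * A := by gcongr; linarith

theorem exists_abs_iteratedDeriv_div_factorial_mul_pow_le (n : ℕ) :
    ∃ D > 0, ∀ (f : ℝ → ℝ) (M A τ : ℝ), ContDiff ℝ (n + 1) f → 0 < τ →
      (∀ y ∈ Icc 0 τ, |iteratedDeriv (n + 1) f y| ≤ M) → (∀ t ∈ Icc 0 τ, |f t| ≤ A) →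
      ∀ k ≤ n, |iteratedDeriv k f 0| / k ! * τ ^ k ≤ D * (A + M * τ ^ (n + 1)) := by
  set v : Fin (n + 1) → ℝ := fun j => j / (n + 1) with hv
  have hvinj : Function.Injective v := fun i j hij => by
    simpa [v, div_left_inj' (by positivity : (n : ℝ) + 1 ≠ 0), Fin.val_inj] using hij
  obtain ⟨D, hD, hDb⟩ := exists_abs_le_mul_of_abs_sum_mul_pow_le hvinj
  refine ⟨D, hD, fun f M A τ hf hτ hM hA k hk => ?_⟩
  have hM0 : 0 ≤ M := (abs_nonneg _).trans (hM 0 ⟨le_rfl, hτ.le⟩)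
  set b : Fin (n + 1) → ℝ := fun i => iteratedDeriv i f 0 / (i : ℕ)! * τ ^ (i : ℕ)
  have hnode : ∀ j, τ * v j ∈ Icc 0 τ := fun j => by
    refine ⟨by positivity, mul_le_of_le_one_right hτ.le ?_⟩
    rw [hv, div_le_one (by positivity)]
    exact_mod_cast j.isLt.le
  have hsum : ∀ j, |∑ i, b i * v j ^ (i : ℕ)| ≤ A + M * τ ^ (n + 1) := fun j => by
    set t := τ * v j
    have htaylor := abs_sub_taylor_sum_le hf hτ (hnode j) hM
    have heq : ∑ i, b i * v j ^ (i : ℕ)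
        = ∑ k ∈ Finset.range (n + 1), iteratedDeriv k f 0 / k ! * t ^ k := by
      rw [Finset.sum_range fun k => iteratedDeriv k f 0 / k ! * t ^ k]
      exact Finset.sum_congr rfl fun i _ => by simp only [b, t, mul_pow]; ring
    have hrem : M * t ^ (n + 1) / n ! ≤ M * τ ^ (n + 1) := by
      obtain ⟨ht0, htτ⟩ := hnode j
      calc M * t ^ (n + 1) / n ! ≤ M * t ^ (n + 1) :=
            div_le_self (by positivity) (by exact_mod_cast n.factorial_pos)
        _ ≤ M * τ ^ (n + 1) := by gcongr
    rw [heq]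
    linarith [hA t (hnode j), abs_sub_abs_le_abs_sub
      (∑ k ∈ Finset.range (n + 1), iteratedDeriv k f 0 / k ! * t ^ k) (f t),
      abs_sub_comm (f t) (∑ k ∈ Finset.range (n + 1), iteratedDeriv k f 0 / k ! * t ^ k)]
  simpa [b, abs_mul, abs_div, abs_of_pos hτ] using hDb b _ hsum ⟨k, Nat.lt_succ_of_le hk⟩

theorem eq_zero_of_forall_le_mul {a K : ℝ} (ha : 0 ≤ a) (h : ∀ τ ∈ Ioc (0 : ℝ) 1, a ≤ K * τ) :
    a = 0 := by
  have hlim : Tendsto (fun τ => K * τ) (𝓝[>] 0) (𝓝 0) := by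
    simpa using ((continuous_const_mul K).tendsto 0).mono_left nhdsWithin_le_nhds
  exact le_antisymm (ge_of_tendsto hlim (eventually_of_mem (Ioc_mem_nhdsGT one_pos) h)) ha

theorem iteratedDeriv_eq_zero_of_abs_le_mul_pow {n : ℕ} {f : ℝ → ℝ} (hf : ContDiff ℝ (n + 1) f)
    {M B : ℝ} (hM : ∀ y ∈ Icc 0 1, |iteratedDeriv (n + 1) f y| ≤ M)
    (hB : ∀ t ∈ Icc (0 : ℝ) 1, |f t| ≤ B * t ^ n) {k : ℕ} (hk : k < n) :
    iteratedDeriv k f 0 = 0 := by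
  obtain ⟨D, hD, hDb⟩ := exists_abs_iteratedDeriv_div_factorial_mul_pow_le n
  have hB0 : 0 ≤ B := by simpa using (abs_nonneg _).trans (hB 1 ⟨zero_le_one, le_rfl⟩)
  have hM0 : 0 ≤ M := (abs_nonneg _).trans (hM 0 ⟨le_rfl, zero_le_one⟩)
  suffices |iteratedDeriv k f 0| / k ! = 0 by simpa [Nat.factorial_ne_zero] using this
  refine eq_zero_of_forall_le_mul (K := D * (B + M)) (by positivity) fun τ ⟨hτ, hτ1⟩ => ?_
  have hcoeff := hDb f M (B * τ ^ n) τ hf hτ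
    (fun y hy => hM y ⟨hy.1, hy.2.trans hτ1⟩)
    (fun t ht => (hB t ⟨ht.1, ht.2.trans hτ1⟩).trans (by gcongr; exacts [ht.1, ht.2])) k hk.le
  have hpow : ∀ m, k + 1 ≤ m → τ ^ m ≤ τ ^ k * τ := fun m hm =>
    (pow_le_pow_of_le_one hτ.le hτ1 hm).trans_eq (pow_succ τ k)
  refine le_of_mul_le_mul_right ?_ (pow_pos hτ k)
  calc |iteratedDeriv k f 0| / k ! * τ ^ k ≤ D * (B * τ ^ n + M * τ ^ (n + 1)) := hcoeff
    _ ≤ D * (B * (τ ^ k * τ) + M * (τ ^ k * τ)) := by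
        gcongr
        exacts [hpow n hk, hpow (n + 1) (by omega)]
    _ = D * (B + M) * τ * τ ^ k := by ring

theorem abs_sub_iteratedDeriv_div_factorial_le {n : ℕ} {f : ℝ → ℝ} (hf : ContDiff ℝ (n + 1) f)
    {M : ℝ} (hM : ∀ y ∈ Icc 0 1, |iteratedDeriv (n + 1) f y| ≤ M)
    (hvan : ∀ k < n, iteratedDeriv k f 0 = 0) :
    |f 1 - iteratedDeriv n f 0 / n !| ≤ M := by
  have hM0 : 0 ≤ M := (abs_nonneg _).trans (hM 0 ⟨le_rfl, zero_le_one⟩)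
  have := abs_sub_taylor_sum_le hf one_pos ⟨zero_le_one, le_rfl⟩ hM
  rw [Finset.sum_range_succ, Finset.sum_eq_zero fun k hk => by
    rw [hvan k (Finset.mem_range.mp hk)]; simp] at this
  simp only [zero_add, one_pow, mul_one] at this
  exact this.trans (div_le_self hM0 (by exact_mod_cast n.factorial_pos))

theorem abs_sub_one_div_mul_deriv_le_of_iteratedDeriv_eq_zero {p : ℕ} (hp : 0 < p) {f : ℝ → ℝ}
    (hf : ContDiff ℝ (p + 1) f) {M : ℝ} (hM : ∀ y ∈ Icc 0 1, |iteratedDeriv (p + 1) f y| ≤ M)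
    (hvan : ∀ k < p, iteratedDeriv k f 0 = 0) :
    |f 1 - 1 / p * deriv f 1| ≤ 2 * M := by
  obtain ⟨m, rfl⟩ : ∃ m, p = m + 1 := ⟨p - 1, by omega⟩
  have hval := abs_sub_iteratedDeriv_div_factorial_le hf hM hvan
  have hder : |deriv f 1 - iteratedDeriv (m + 1) f 0 / m !| ≤ M := by
    have hf' : ContDiff ℝ (m + 1) (deriv f) := by exact_mod_cast (contDiff_succ_iff_deriv.mp hf).2.2
    simpa only [← iteratedDeriv_succ'] using abs_sub_iteratedDeriv_div_factorial_le hf'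
      (by simpa only [← iteratedDeriv_succ'] using hM)
      (fun k hk => by rw [← iteratedDeriv_succ']; exact hvan (k + 1) (by omega))
  have hid : f 1 - 1 / (m + 1 : ℕ) * deriv f 1
      = (f 1 - iteratedDeriv (m + 1) f 0 / (m + 1)!)
        - 1 / (m + 1 : ℕ) * (deriv f 1 - iteratedDeriv (m + 1) f 0 / m !) := by
    rw [Nat.factorial_succ]; push_cast; field_simp; ring
  have hp1 : (1 : ℝ) / (m + 1 : ℕ) ≤ 1 := by
    rw [div_le_one (by positivity)]; exact_mod_cast Nat.le_add_left 1 m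
  set a := 1 / ((m + 1 : ℕ) : ℝ)
  calc |f 1 - a * deriv f 1|
      ≤ |f 1 - iteratedDeriv (m + 1) f 0 / (m + 1)!|
        + |a * (deriv f 1 - iteratedDeriv (m + 1) f 0 / m !)| := hid ▸ abs_sub _ _
    _ = |f 1 - iteratedDeriv (m + 1) f 0 / (m + 1)!|
        + a * |deriv f 1 - iteratedDeriv (m + 1) f 0 / m !| := by
          rw [abs_mul, abs_of_pos (by positivity : 0 < a)]
    _ ≤ M + 1 * M := by gcongr
    _ = 2 * M := by ring
section Line

variable {E F : Type*} [NormedAddCommGroup E] [NormedSpace ℝ E] [NormedAddCommGroup F]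
  [NormedSpace ℝ F]

theorem iteratedDeriv_comp_add_smul {n : WithTop ℕ∞} {f : E → F} (hf : ContDiff ℝ n f) {i : ℕ}
    (hi : i ≤ n) (c h : E) (t : ℝ) :
    iteratedDeriv i (fun s : ℝ => f (c + s • h)) t
      = iteratedFDeriv ℝ i f (c + t • h) fun _ => h := by
  have hline : (fun s : ℝ => f (c + s • h)) =
      (fun y => f (c + y)) ∘ ContinuousLinearMap.smulRight (1 : ℝ →L[ℝ] ℝ) h := rfl
  rw [iteratedDeriv_eq_iteratedFDeriv, hline,
    ContinuousLinearMap.iteratedFDeriv_comp_right _ (f := fun y => f (c + y))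
      (hf.comp (contDiff_const.add contDiff_id)) _ hi]
  simp [iteratedFDeriv_comp_add_left]

theorem norm_iteratedDeriv_comp_add_smul_le {n : WithTop ℕ∞} {f : E → F} (hf : ContDiff ℝ n f)
    {i : ℕ} (hi : i ≤ n) {c h : E} {t M : ℝ} (hM : ‖iteratedFDeriv ℝ i f (c + t • h)‖ ≤ M) :
    ‖iteratedDeriv i (fun s : ℝ => f (c + s • h)) t‖ ≤ M * ‖h‖ ^ i := by
  rw [iteratedDeriv_comp_add_smul hf hi]
  refine ((iteratedFDeriv ℝ i f (c + t • h)).le_opNorm fun _ => h).trans ?_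
  simp only [Finset.prod_const, Finset.card_univ, Fintype.card_fin]
  gcongr

end Line

theorem deriv_comp_add_smul_eq_inner_gradient {E : Type*} [NormedAddCommGroup E]
    [InnerProductSpace ℝ E] [CompleteSpace E] {f : E → ℝ} {c h : E} {t : ℝ}
    (hf : DifferentiableAt ℝ f (c + t • h)) :
    deriv (fun s : ℝ => f (c + s • h)) t = ⟪gradient f (c + t • h), h⟫ := by
  have hline : HasDerivAt (fun s : ℝ => c + s • h) h t := by
    simpa using ((hasDerivAt_id t).smul_const h).const_add c
  rw [gradient, InnerProductSpace.toDual_symm_apply]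
  exact (hf.hasFDerivAt.comp_hasDerivAt t hline).deriv

theorem exists_ball_subset_and_norm_iteratedFDeriv_le {E F : Type*} [NormedAddCommGroup E]
    [NormedSpace ℝ E] [NormedAddCommGroup F] [NormedSpace ℝ F] {n : ℕ} {f : E → F}
    (hf : ContDiff ℝ n f) {U : Set E} {x : E} (hU : U ∈ 𝓝 x) :
    ∃ ε > 0, ∃ M > 0, ∀ y ∈ ball x ε, y ∈ U ∧ ‖iteratedFDeriv ℝ n f y‖ ≤ M := by
  have hcont := (hf.continuous_iteratedFDeriv le_rfl).norm.tendsto x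
  obtain ⟨ε, hε, hball⟩ := eventually_nhds_iff_ball.mp <|
    (show ∀ᶠ y in 𝓝 x, y ∈ U from hU).and (hcont.eventually (ge_mem_nhds (lt_add_one _)))
  exact ⟨ε, hε, _, by positivity, hball⟩

section Growth

variable {E : Type*} [NormedAddCommGroup E] [InnerProductSpace ℝ E]
  {p : ℕ} {f : E → ℝ} {S K : Set E} {C M : ℝ}

theorem exists_norm_le_real_inner_eq_mul_norm (u : E) {r : ℝ} (hr : 0 ≤ r) :
    ∃ h : E, ‖h‖ ≤ r ∧ ⟪u, h⟫ = r * ‖u‖ := by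
  rcases eq_or_ne u 0 with rfl | hu
  · exact ⟨0, by simpa using hr, by simp⟩
  refine ⟨(r / ‖u‖) • u, ?_, ?_⟩
  · rw [norm_smul, Real.norm_of_nonneg (by positivity), div_mul_cancel₀ _ (norm_ne_zero_iff.mpr hu)]
  · rw [real_inner_smul_right, real_inner_self_eq_norm_sq]
    field_simp

theorem abs_comp_add_smul_le (hC : 0 ≤ C) (hf0 : ∀ y ∈ K, 0 ≤ f y)
    (hfS : ∀ y ∈ K, f y ≤ C * infDist y S ^ p) {c h : E} {s : ℝ} (hs : 0 ≤ s)
    (hmem : c + s • h ∈ K) : |f (c + s • h)| ≤ C * (infDist c S + s * ‖h‖) ^ p := by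
  have hdist : infDist (c + s • h) S ≤ infDist c S + s * ‖h‖ := by
    simpa [dist_self_add_left, norm_smul, abs_of_nonneg hs] using
      infDist_le_infDist_add_dist (x := c + s • h) (y := c) (s := S)
  rw [abs_of_nonneg (hf0 _ hmem)]
  exact (hfS _ hmem).trans (by gcongr; exact infDist_nonneg)

theorem abs_sub_inner_gradient_le [CompleteSpace E] (hp : 0 < p) (hf : ContDiff ℝ (p + 1) f)
    (hC : 0 ≤ C) (hf0 : ∀ y ∈ K, 0 ≤ f y) (hfS : ∀ y ∈ K, f y ≤ C * infDist y S ^ p)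
    (hM : ∀ y ∈ K, ‖iteratedFDeriv ℝ (p + 1) f y‖ ≤ M) {x xh : E} (hxh : xh ∈ S)
    (hseg : segment ℝ xh x ⊆ K) :
    |f x - 1 / p * ⟪gradient f x, x - xh⟫| ≤ 2 * M * ‖x - xh‖ ^ (p + 1) := by
  set h := x - xh
  set ψ : ℝ → ℝ := fun s => f (xh + s • h)
  have hmem : ∀ s ∈ Icc (0 : ℝ) 1, xh + s • h ∈ K := fun s hs =>
    hseg (segment_eq_image' ℝ xh x ▸ ⟨s, hs, rfl⟩)
  have hψ : ContDiff ℝ (p + 1) ψ := hf.comp (contDiff_const.add (contDiff_id.smul contDiff_const))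
  have hψM : ∀ s ∈ Icc (0 : ℝ) 1, |iteratedDeriv (p + 1) ψ s| ≤ M * ‖h‖ ^ (p + 1) :=
    fun s hs => by
      simpa only [Real.norm_eq_abs] using
        norm_iteratedDeriv_comp_add_smul_le hf le_rfl (hM _ (hmem s hs))
  have hψB : ∀ s ∈ Icc (0 : ℝ) 1, |ψ s| ≤ C * ‖h‖ ^ p * s ^ p := fun s hs =>
    (abs_comp_add_smul_le hC hf0 hfS hs.1 (hmem s hs)).trans_eq <| by
      rw [infDist_zero_of_mem hxh, zero_add, mul_pow]; ring
  have hx : xh + (1 : ℝ) • h = x := by simp [h]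
  have key := abs_sub_one_div_mul_deriv_le_of_iteratedDeriv_eq_zero hp hψ hψM
    fun k hk => iteratedDeriv_eq_zero_of_abs_le_mul_pow hψ hψM hψB hk
  rw [deriv_comp_add_smul_eq_inner_gradient (hf.differentiable (by simp)).differentiableAt] at key
  simp only [ψ, hx] at key
  linarith

theorem gradient_eq_zero_of_infDist_eq_zero [CompleteSpace E] (hp : 0 < p) (hK : IsOpen K)
    (hf0 : ∀ y ∈ K, 0 ≤ f y) (hfS : ∀ y ∈ K, f y ≤ C * infDist y S ^ p) {x : E} (hx : x ∈ K)
    (hr : infDist x S = 0) : gradient f x = 0 := by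
  have hmin : IsLocalMin f x := eventually_of_mem (hK.mem_nhds hx) fun y hy => by
    have := hfS x hx
    rw [hr, zero_pow hp.ne', mul_zero] at this
    linarith [hf0 y hy]
  simp [gradient, hmin.fderiv_eq_zero]

theorem exists_norm_gradient_le [CompleteSpace E] (hp : 1 ≤ p) (hf : ContDiff ℝ (p + 1) f)
    (hC : 0 ≤ C) (hK : IsOpen K) (hf0 : ∀ y ∈ K, 0 ≤ f y) (hfS : ∀ y ∈ K, f y ≤ C * infDist y S ^ p)
    (hM : ∀ y ∈ K, ‖iteratedFDeriv ℝ (p + 1) f y‖ ≤ M) :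
    ∃ D > 0, ∀ x, closedBall x (infDist x S) ⊆ K →
      ‖gradient f x‖ ≤ D * (2 ^ p * C + M * infDist x S) * infDist x S ^ (p - 1) := by
  obtain ⟨D, hD, hDb⟩ := exists_abs_iteratedDeriv_div_factorial_mul_pow_le p
  refine ⟨D, hD, fun x hball => ?_⟩
  set r := infDist x S
  have hxK : x ∈ K := hball (mem_closedBall_self infDist_nonneg)
  have hM0 : 0 ≤ M := (norm_nonneg _).trans (hM x hxK)
  rcases (infDist_nonneg (x := x) (s := S)).eq_or_lt with hr | hr
  · rw [gradient_eq_zero_of_infDist_eq_zero hp hK hf0 hfS hxK hr.symm, norm_zero]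
    positivity
  obtain ⟨h, hh, hinner⟩ := exists_norm_le_real_inner_eq_mul_norm (gradient f x) hr.le
  set η : ℝ → ℝ := fun s => f (x + s • h)
  have hstep : ∀ s ∈ Icc (0 : ℝ) 1, s * ‖h‖ ≤ r := fun s hs => by nlinarith [hs.2, norm_nonneg h]
  have hmem : ∀ s ∈ Icc (0 : ℝ) 1, x + s • h ∈ K := fun s hs => hball <| by
    rw [mem_closedBall, dist_self_add_left, norm_smul, Real.norm_of_nonneg hs.1]
    exact hstep s hs
  have hη : ContDiff ℝ (p + 1) η := hf.comp (contDiff_const.add (contDiff_id.smul contDiff_const))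
  have hηM : ∀ s ∈ Icc (0 : ℝ) 1, |iteratedDeriv (p + 1) η s| ≤ M * r ^ (p + 1) :=
    fun s hs => by
      rw [← Real.norm_eq_abs]
      exact (norm_iteratedDeriv_comp_add_smul_le hf le_rfl (hM _ (hmem s hs))).trans (by gcongr)
  have hηA : ∀ s ∈ Icc (0 : ℝ) 1, |η s| ≤ C * (2 * r) ^ p := fun s hs =>
    (abs_comp_add_smul_le hC hf0 hfS hs.1 (hmem s hs)).trans <| by
      have := hstep s hs
      gcongr
      · exact add_nonneg infDist_nonneg (by have := hs.1; positivity)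
      · linarith
  have key := hDb η _ _ 1 hη one_pos hηM hηA 1 hp
  rw [iteratedDeriv_one, deriv_comp_add_smul_eq_inner_gradient
    (hf.differentiable (by simp)).differentiableAt, zero_smul, add_zero, hinner] at key
  refine le_of_mul_le_mul_right ?_ hr
  calc ‖gradient f x‖ * r = |r * ‖gradient f x‖| / (1 : ℕ)! * 1 ^ 1 := by
        rw [abs_of_nonneg (by positivity)]; simp [mul_comm]
    _ ≤ D * (C * (2 * r) ^ p + M * r ^ (p + 1) * 1 ^ (p + 1)) := key
    _ = D * (2 ^ p * C + M * r) * r ^ (p - 1) * r := by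
        obtain ⟨q, rfl⟩ : ∃ q, p = q + 1 := ⟨p - 1, by omega⟩
        simp only [Nat.add_sub_cancel]; ring

end Growth

theorem power_growth_gradient_and_aiming_general
    {E : Type*} [NormedAddCommGroup E] [InnerProductSpace ℝ E] [FiniteDimensional ℝ E]
    (p : ℕ) (hp : 2 ≤ p) (g : E → ℝ) (hg : ContDiff ℝ (p + 1 : ℕ) g)
    (S : Set E)
    (gmin : ℝ) (hgmin : ∀ x, gmin ≤ g x)
    (xb : E) (hxb : xb ∈ S)
    (U : Set E) (hU : U ∈ nhds xb)
    (C : ℝ) (hC : 0 < C)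
    (hub : ∀ x ∈ U, g x - gmin ≤ C * Metric.infDist x S ^ p) :
    (∃ U' ∈ nhds xb, ∃ C' > (0 : ℝ), ∀ x ∈ U',
        ‖gradient g x‖ ≤ C' * Metric.infDist x S ^ (p - 1)) ∧
    (∃ U'' ∈ nhds xb, ∃ C'' > (0 : ℝ), ∀ x ∈ U'', ∀ xh ∈ S,
        ‖x - xh‖ = Metric.infDist x S →
        |g x - gmin - (1 / (p : ℝ)) * ⟪gradient g x, x - xh⟫| ≤
          C'' * Metric.infDist x S ^ (p + 1)) := by
  set f : E → ℝ := fun y => g y - gmin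
  have hf : ContDiff ℝ (p + 1) f := by exact_mod_cast hg.sub contDiff_const
  have hgrad : ∀ x, gradient f x = gradient g x := fun x => by simp [f, gradient, fderiv_sub_const]
  obtain ⟨ε, hε, M, hM0, hεU⟩ := exists_ball_subset_and_norm_iteratedFDeriv_le hf hU
  set ρ := min (ε / 2) 1
  have hρ : 0 < ρ := by positivity
  have hsub : ball xb (2 * ρ) ⊆ ball xb ε := ball_subset_ball (by linarith [min_le_left (ε / 2) 1])
  have hf0 : ∀ y ∈ ball xb (2 * ρ), 0 ≤ f y := fun y _ => sub_nonneg.mpr (hgmin y)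
  have hfS : ∀ y ∈ ball xb (2 * ρ), f y ≤ C * infDist y S ^ p := fun y hy =>
    hub y (hεU y (hsub hy)).1
  have hM : ∀ y ∈ ball xb (2 * ρ), ‖iteratedFDeriv ℝ (p + 1) f y‖ ≤ M := fun y hy =>
    (hεU y (hsub hy)).2
  have hdist : ∀ x ∈ ball xb ρ, infDist x S < ρ := fun x hx =>
    (infDist_le_dist_of_mem hxb).trans_lt hx
  constructor
  · obtain ⟨D, hD, hDb⟩ := exists_norm_gradient_le (by omega) hf hC.le isOpen_ball hf0 hfS hM
    refine ⟨ball xb ρ, ball_mem_nhds xb hρ, D * (2 ^ p * C + M), by positivity, fun x hx => ?_⟩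
    calc ‖gradient g x‖ = ‖gradient f x‖ := by rw [hgrad]
      _ ≤ D * (2 ^ p * C + M * infDist x S) * infDist x S ^ (p - 1) :=
          hDb x (closedBall_subset_ball' (by linarith [hdist x hx, mem_ball.mp hx]))
      _ ≤ D * (2 ^ p * C + M) * infDist x S ^ (p - 1) := by
          have : M * infDist x S ≤ M :=
            mul_le_of_le_one_right hM0.le ((hdist x hx).le.trans (min_le_right _ _))
          gcongr
          exact pow_nonneg infDist_nonneg _
  · refine ⟨ball xb ρ, ball_mem_nhds xb hρ, 2 * M, by positivity, fun x hx xh hxh hnear => ?_⟩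
    have hxhK : xh ∈ ball xb (2 * ρ) := by
      rw [mem_ball]
      linarith [dist_triangle xh x xb, mem_ball.mp hx, hdist x hx, dist_eq_norm xh x,
        norm_sub_rev x xh]
    have hseg := (convex_ball xb (2 * ρ)).segment_subset hxhK (ball_subset_ball (by linarith) hx)
    simpa only [f, hgrad, hnear] using
      abs_sub_inner_gradient_le (by omega) hf hC.le hf0 hfS hM hxh hseg

/-- **Consequences of power upper growth for smooth functions.**
Let `g : E → ℝ` be `C^{p+1}`-smooth (`p ≥ 2`), let `S` be a nonempty closed subset of
the minimizers of `g` (with minimal value `gmin`), and suppose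
`g x − gmin ≤ C · dist^p(x, S)` near `xb ∈ S`.  Then near `xb`:
(1) `‖∇g(x)‖ ≤ C′ dist^{p−1}(x, S)`, and (2) for every nearest point `x̂ ∈ S` of `x`,
`|g x − gmin − (1/p)⟨∇g(x), x − x̂⟩| ≤ C″ dist^{p+1}(x, S)`. -/
theorem power_growth_gradient_and_aiming
    {E : Type*} [NormedAddCommGroup E] [InnerProductSpace ℝ E] [FiniteDimensional ℝ E]
    (p : ℕ) (hp : 2 ≤ p) (g : E → ℝ) (hg : ContDiff ℝ (p + 1 : ℕ) g)
    (S : Set E) (hSne : S.Nonempty) (hScl : IsClosed S)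
    (gmin : ℝ) (hgmin : ∀ x, gmin ≤ g x) (hSmin : ∀ x ∈ S, g x = gmin)
    (xb : E) (hxb : xb ∈ S)
    (U : Set E) (hU : U ∈ nhds xb)
    (C : ℝ) (hC : 0 < C)
    (hub : ∀ x ∈ U, g x - gmin ≤ C * Metric.infDist x S ^ p) :
    (∃ U' ∈ nhds xb, ∃ C' > (0 : ℝ), ∀ x ∈ U',
        ‖gradient g x‖ ≤ C' * Metric.infDist x S ^ (p - 1)) ∧
    (∃ U'' ∈ nhds xb, ∃ C'' > (0 : ℝ), ∀ x ∈ U'', ∀ xh ∈ S,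
        ‖x - xh‖ = Metric.infDist x S →
        |g x - gmin - (1 / (p : ℝ)) * ⟪gradient g x, x - xh⟫| ≤
          C'' * Metric.infDist x S ^ (p + 1)) :=
  power_growth_gradient_and_aiming_general p hp g hg S gmin hgmin xb hxb U hU C hC hub
end

section
/- Let f : ℝ^d → ℝ be C¹-smooth with a minimizer x̄ and minimal value f* = f(x̄), and fix α ∈ (0,1), c_L > 0, L > 0 and δ > 0 such that on the ball U = B(x̄, δ): f(x) ≥ f* for all x ∈ U, the gradient ∇f is L-Lipschitz continuous on U, and the Łojasiewicz inequality c_L · ‖∇f(x)‖ ≥ (f(x) − f*)^α holds for all x ∈ U. Consider gradient descent with constant stepsize: x_{k+1} = x_k − η∇f(x_k) with 0 < η ≤ 1/L. Then there exists ρ₀ > 0 such that for every initialization x₀ ∈ B(x̄, ρ₀) and every k ≥ 1, the iterate x_k lies in U and satisfies ‖x_k − x₀‖ ≤ (2/L)‖∇f(x₀)‖ + (4c_L/(1 − α)) · (f(x₀) − f*)^{1−α}. -/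
/-!
Near the minimizer, one gradient step moves by `η‖∇f(y)‖` while decreasing `f` by at least
`(η/2)‖∇f(y)‖²` (descent lemma, `ηL ≤ 1`). By concavity of `t ↦ t^{1-α}` and the Łojasiewicz
inequality, the step length is then bounded by the drop of the potential
`V(y) = (2c_L/(1-α)) (f(y) - f*)^{1-α}`, so the path length from `x₀` is at most `V(x₀)`.
Since `V(x₀) → 0` as `x₀ → x̄`, starting close enough keeps the whole trajectory in `U`.
-/

open Metric Set InnerProductSpace Filter Topology
open scoped NNReal

theorem Real.mul_rpow_sub_one_mul_sub_le_rpow_sub_rpow {a b p : ℝ} (ha : 0 < a) (hb : 0 ≤ b)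
    (hp0 : 0 ≤ p) (hp1 : p ≤ 1) :
    p * a ^ (p - 1) * (a - b) ≤ a ^ p - b ^ p := by
  have hbern := rpow_one_add_le_one_add_mul_self (s := b / a - 1)
    (by linarith [div_nonneg hb ha.le]) hp0 hp1
  rw [add_sub_cancel] at hbern
  have hbp : b ^ p = a ^ p * (b / a) ^ p := by
    rw [← Real.mul_rpow ha.le (div_nonneg hb ha.le), mul_div_cancel₀ b ha.ne']
  have hap : a ^ (p - 1) = a ^ p / a := Real.rpow_sub_one ha.ne' p
  calc p * a ^ (p - 1) * (a - b) = a ^ p - a ^ p * (1 + p * (b / a - 1)) := by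
        rw [hap]; field_simp; ring
    _ ≤ a ^ p - b ^ p := by
        rw [hbp]; gcongr

section Descent

variable {E : Type*} [NormedAddCommGroup E] [InnerProductSpace ℝ E] [CompleteSpace E]
  {f : E → ℝ} {K : ℝ≥0} {s : Set E}

theorem image_add_le_of_lipschitzOnWith_gradient (hs : Convex ℝ s)
    (hf : ∀ y ∈ s, DifferentiableAt ℝ f y) (hLip : LipschitzOnWith K (gradient f) s)
    {x v : E} (hx : x ∈ s) (hxv : x + v ∈ s) :
    f (x + v) ≤ f x + ⟪gradient f x, v⟫_ℝ + K / 2 * ‖v‖ ^ 2 := by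
  set φ : ℝ → ℝ := fun t => f (x + t • v) - t * ⟪gradient f x, v⟫_ℝ - K / 2 * ‖v‖ ^ 2 * t ^ 2
  have hseg : ∀ t ∈ Icc (0 : ℝ) 1, x + t • v ∈ s := fun t ht => by
    simpa using hs.add_smul_mem hx hxv ht
  have hφ : ∀ t ∈ Icc (0 : ℝ) 1, HasDerivAt φ
      (⟪gradient f (x + t • v) - gradient f x, v⟫_ℝ - K * ‖v‖ ^ 2 * t) t := by
    intro t ht
    have hline : HasDerivAt (fun t : ℝ => x + t • v) v t := by
      simpa using ((hasDerivAt_id t).smul_const v).const_add x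
    have hcomp := (hf _ (hseg t ht)).hasGradientAt.hasFDerivAt.comp_hasDerivAt t hline
    rw [toDual_apply_apply] at hcomp
    refine ((hcomp.sub ((hasDerivAt_id t).mul_const ⟪gradient f x, v⟫_ℝ)).sub
      ((hasDerivAt_pow 2 t).const_mul (K / 2 * ‖v‖ ^ 2))).congr_deriv ?_
    rw [inner_sub_left]
    push_cast
    ring
  have hanti : AntitoneOn φ (Icc 0 1) := by
    refine antitoneOn_of_deriv_nonpos (convex_Icc 0 1)
      (fun t ht => (hφ t ht).continuousAt.continuousWithinAt)
      (fun t ht => (hφ t (interior_subset ht)).differentiableAt.differentiableWithinAt)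
      fun t ht => ?_
    rw [interior_Icc] at ht
    have ht' : t ∈ Icc (0 : ℝ) 1 := Ioo_subset_Icc_self ht
    have hclose : ‖gradient f (x + t • v) - gradient f x‖ ≤ K * (t * ‖v‖) := by
      simpa [dist_eq_norm, norm_smul, abs_of_pos ht.1] using
        hLip.dist_le_mul _ (hseg t ht') _ hx
    rw [(hφ t ht').deriv]
    nlinarith [real_inner_le_norm (gradient f (x + t • v) - gradient f x) v, norm_nonneg v]
  have h01 := hanti ⟨le_rfl, zero_le_one⟩ ⟨zero_le_one, le_rfl⟩ zero_le_one
  simp only [φ, one_smul, zero_smul, add_zero, one_mul, zero_mul, sub_zero, one_pow,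
    mul_one, ne_eq, OfNat.ofNat_ne_zero, not_false_eq_true, zero_pow, mul_zero] at h01
  linarith

theorem image_sub_smul_gradient_add_le (hs : Convex ℝ s)
    (hf : ∀ y ∈ s, DifferentiableAt ℝ f y) (hLip : LipschitzOnWith K (gradient f) s)
    {η : ℝ} (hη0 : 0 ≤ η) (hηK : η * K ≤ 1) {y : E} (hy : y ∈ s)
    (hy' : y - η • gradient f y ∈ s) :
    f (y - η • gradient f y) + η / 2 * ‖gradient f y‖ ^ 2 ≤ f y := by
  rw [sub_eq_add_neg] at hy' ⊢
  have h := image_add_le_of_lipschitzOnWith_gradient hs hf hLip hy hy'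
  rw [inner_neg_right, real_inner_smul_right, real_inner_self_eq_norm_sq, norm_neg, norm_smul,
    Real.norm_eq_abs, abs_of_nonneg hη0] at h
  nlinarith [sq_nonneg ‖gradient f y‖, mul_nonneg hη0 (sq_nonneg ‖gradient f y‖)]

end Descent

theorem mul_le_rpow_sub_rpow_of_add_le_of_rpow_le {a b c g η α : ℝ} (hb : 0 ≤ b) (hc : 0 ≤ c)
    (hg : 0 ≤ g) (hη : 0 < η) (hα0 : 0 ≤ α) (hα1 : α < 1)
    (hdec : b + η / 2 * g ^ 2 ≤ a) (hKL : a ^ α ≤ c * g) :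
    η * g ≤ 2 * c / (1 - α) * (a ^ (1 - α) - b ^ (1 - α)) := by
  have hp : 0 < 1 - α := by linarith
  rcases hg.eq_or_lt with rfl | hg
  · have hba : b ^ (1 - α) ≤ a ^ (1 - α) :=
      Real.rpow_le_rpow hb (by linarith) hp.le
    rw [mul_zero]
    exact mul_nonneg (by positivity) (sub_nonneg.mpr hba)
  have ha : 0 < a := by linarith [show 0 < η / 2 * g ^ 2 by positivity]
  have hc0 : c ≠ 0 := by
    rintro rfl
    rw [zero_mul] at hKL
    linarith [Real.rpow_pos_of_pos ha α]
  have htangent := Real.mul_rpow_sub_one_mul_sub_le_rpow_sub_rpow ha hb hp.le (by linarith)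
  rw [sub_sub_cancel_left, Real.rpow_neg ha.le] at htangent
  calc η * g = 2 * c / (1 - α) * ((1 - α) * (c * g)⁻¹ * (η / 2 * g ^ 2)) := by
        field_simp
    _ ≤ 2 * c / (1 - α) * ((1 - α) * (a ^ α)⁻¹ * (a - b)) := by
        gcongr
        linarith
    _ ≤ 2 * c / (1 - α) * (a ^ (1 - α) - b ^ (1 - α)) := by gcongr

theorem mem_ball_and_dist_le_sub_of_dist_succ_le_sub {X : Type*} [PseudoMetricSpace X]
    {x : ℕ → X} {V : X → ℝ} {c : X} {r : ℝ}
    (hstep : ∀ k, x k ∈ ball c r →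
      0 ≤ V (x (k + 1)) ∧ dist (x k) (x (k + 1)) ≤ V (x k) - V (x (k + 1)))
    (hV0 : 0 ≤ V (x 0)) (h0 : dist (x 0) c + V (x 0) < r) (k : ℕ) :
    x k ∈ ball c r ∧ dist (x 0) (x k) ≤ V (x 0) - V (x k) := by
  induction k with
  | zero => exact ⟨by rw [mem_ball]; linarith, by simp⟩
  | succ k ih =>
    obtain ⟨hVk, hk⟩ := hstep k ih.1
    have hlen : dist (x 0) (x (k + 1)) ≤ V (x 0) - V (x (k + 1)) := by
      linarith [dist_triangle (x 0) (x k) (x (k + 1)), ih.2]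
    refine ⟨?_, hlen⟩
    rw [mem_ball]
    linarith [dist_triangle_left (x (k + 1)) c (x 0)]

theorem eventually_dist_add_mul_rpow_sub_lt {X : Type*} [PseudoMetricSpace X] {f : X → ℝ}
    {a : X} (hf : ContinuousAt f a) {C p r : ℝ} (hp : 0 < p) (hr : 0 < r) :
    ∀ᶠ y in 𝓝 a, dist y a + C * (f y - f a) ^ p < r := by
  have hlim : Tendsto (fun y => dist y a + C * (f y - f a) ^ p) (𝓝 a)
      (𝓝 (dist a a + C * (f a - f a) ^ p)) :=
    (tendsto_id.dist tendsto_const_nhds).add (tendsto_const_nhds.mul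
      ((hf.sub continuousAt_const).rpow_const (Or.inr hp.le)))
  rw [dist_self, sub_self, Real.zero_rpow hp.ne', mul_zero, add_zero] at hlim
  exact hlim.eventually_lt_const hr

section GradientStep

variable {E : Type*} [NormedAddCommGroup E] [InnerProductSpace ℝ E] [CompleteSpace E]
  {f : E → ℝ} {xb y : E} {K : ℝ≥0} {δ η : ℝ}

theorem IsLocalMin.gradient_eq_zero_s8 (h : IsLocalMin f xb) : gradient f xb = 0 := by
  rw [gradient, h.fderiv_eq_zero, map_zero]

theorem sub_smul_gradient_mem_ball (hLip : LipschitzOnWith K (gradient f) (ball xb δ))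
    (hxb : gradient f xb = 0) (hη0 : 0 ≤ η) (hηK : η * K ≤ 1) (hy : y ∈ ball xb (δ / 2)) :
    y - η • gradient f y ∈ ball xb δ := by
  have hδ : 0 < δ / 2 := nonempty_ball.mp ⟨y, hy⟩
  have hgrad : ‖gradient f y‖ ≤ K * dist y xb := by
    simpa [hxb, dist_eq_norm] using
      hLip.dist_le_mul _ (ball_subset_ball (by linarith) hy) _ (mem_ball_self (by linarith))
  have hstep : ‖η • gradient f y‖ ≤ dist y xb := by
    rw [norm_smul, Real.norm_of_nonneg hη0]
    nlinarith [mul_le_mul_of_nonneg_left hgrad hη0, dist_nonneg (x := y) (y := xb)]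
  calc dist (y - η • gradient f y) xb ≤ dist y xb + ‖η • gradient f y‖ := by
        rw [dist_eq_norm, dist_eq_norm, sub_right_comm]
        exact norm_sub_le _ _
    _ < δ := by linarith [mem_ball.mp hy]

theorem sub_smul_gradient_mem_ball_and_dist_le {α c : ℝ}
    (hf : ∀ z ∈ ball xb δ, DifferentiableAt ℝ f z)
    (hmin : ∀ z ∈ ball xb δ, f xb ≤ f z) (hLip : LipschitzOnWith K (gradient f) (ball xb δ))
    (hKL : ∀ z ∈ ball xb δ, (f z - f xb) ^ α ≤ c * ‖gradient f z‖)
    (hxb : gradient f xb = 0) (hα0 : 0 ≤ α) (hα1 : α < 1) (hc : 0 ≤ c)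
    (hη0 : 0 < η) (hηK : η * K ≤ 1) (hy : y ∈ ball xb (δ / 2)) :
    y - η • gradient f y ∈ ball xb δ ∧
      dist y (y - η • gradient f y) ≤ 2 * c / (1 - α) *
        ((f y - f xb) ^ (1 - α) - (f (y - η • gradient f y) - f xb) ^ (1 - α)) := by
  have hyδ : y ∈ ball xb δ := ball_subset_ball (by linarith [nonempty_ball.mp ⟨y, hy⟩]) hy
  have hy' := sub_smul_gradient_mem_ball hLip hxb hη0.le hηK hy
  have hdec := image_sub_smul_gradient_add_le (convex_ball xb δ) hf hLip hη0.le hηK hyδ hy'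
  refine ⟨hy', ?_⟩
  rw [dist_eq_norm, sub_sub_cancel, norm_smul, Real.norm_of_nonneg hη0.le]
  exact mul_le_rpow_sub_rpow_of_add_le_of_rpow_le (sub_nonneg.mpr (hmin _ hy')) hc
    (norm_nonneg _) hη0 hα0 hα1 (by linarith) (hKL y hyδ)

end GradientStep

/-- **Finite length of gradient descent under the Łojasiewicz inequality.**
Let `f : ℝ^d → ℝ` be `C¹` with minimizer `xb`, and suppose on the ball `U = B(xb, δ)`
that `f ≥ f(xb)`, `∇f` is `L`-Lipschitz, and the Łojasiewicz inequality
`c_L‖∇f(x)‖ ≥ (f x − f xb)^α` holds (`α ∈ (0,1)`).  Then for gradient descent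
`x_{k+1} = x_k − η ∇f(x_k)` with `0 < η ≤ 1/L` there is `ρ₀ > 0` such that every
trajectory started in `B(xb, ρ₀)` stays in `U` and satisfies
`‖x_k − x₀‖ ≤ (2/L)‖∇f(x₀)‖ + (4 c_L/(1−α)) (f x₀ − f xb)^{1−α}` for all `k ≥ 1`. -/
theorem gradient_descent_finite_length
    (d : ℕ) (f : EuclideanSpace ℝ (Fin d) → ℝ) (hf : ContDiff ℝ 1 f)
    (xb : EuclideanSpace ℝ (Fin d))
    (α c_L L δ : ℝ) (hα0 : 0 < α) (hα1 : α < 1)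
    (hcL : 0 < c_L) (hL : 0 < L) (hδ : 0 < δ)
    (hmin : ∀ x ∈ Metric.ball xb δ, f xb ≤ f x)
    (hLip : LipschitzOnWith L.toNNReal (gradient f) (Metric.ball xb δ))
    (hKL : ∀ x ∈ Metric.ball xb δ, (f x - f xb) ^ α ≤ c_L * ‖gradient f x‖)
    (η : ℝ) (hη0 : 0 < η) (hη : η ≤ 1 / L) :
    ∃ ρ₀ > (0 : ℝ), ∀ x : ℕ → EuclideanSpace ℝ (Fin d),
      (∀ k : ℕ, x (k + 1) = x k - η • gradient f (x k)) →
      x 0 ∈ Metric.ball xb ρ₀ →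
      ∀ k : ℕ, 1 ≤ k →
        x k ∈ Metric.ball xb δ ∧
        ‖x k - x 0‖ ≤ (2 / L) * ‖gradient f (x 0)‖ +
          (4 * c_L / (1 - α)) * (f (x 0) - f xb) ^ (1 - α) := by
  have hxb : gradient f xb = 0 :=
    IsLocalMin.gradient_eq_zero_s8 (mem_of_superset (ball_mem_nhds xb hδ) hmin)
  have hηL : η * L.toNNReal ≤ 1 := by
    rw [Real.coe_toNNReal L hL.le]
    exact (le_div_iff₀ hL).mp hη
  set V := fun y => 2 * c_L / (1 - α) * (f y - f xb) ^ (1 - α) with hV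
  have hV_nonneg : ∀ y ∈ ball xb δ, 0 ≤ V y := fun y hy =>
    mul_nonneg (div_nonneg (by positivity) (by linarith))
      (Real.rpow_nonneg (sub_nonneg.mpr (hmin y hy)) _)
  have hnear := (eventually_dist_add_mul_rpow_sub_lt hf.continuous.continuousAt
    (C := 2 * c_L / (1 - α)) (sub_pos.mpr hα1) (half_pos hδ)).and (ball_mem_nhds xb hδ)
  obtain ⟨ρ₀, hρ₀, hstart⟩ := eventually_nhds_iff_ball.mp hnear
  refine ⟨ρ₀, hρ₀, fun x hrec hx0 k _ => ?_⟩
  obtain ⟨hx0V, hx0δ⟩ := hstart _ hx0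
  have hstep : ∀ k, x k ∈ ball xb (δ / 2) →
      0 ≤ V (x (k + 1)) ∧ dist (x k) (x (k + 1)) ≤ V (x k) - V (x (k + 1)) := by
    intro k hk
    obtain ⟨hmem, hdist⟩ := sub_smul_gradient_mem_ball_and_dist_le
      (fun z _ => hf.differentiable one_ne_zero z) hmin hLip hKL hxb hα0.le hα1 hcL.le hη0 hηL hk
    rw [← hrec] at hmem hdist
    exact ⟨hV_nonneg _ hmem, by simpa only [hV, mul_sub] using hdist⟩
  obtain ⟨hk, hlen⟩ :=
    mem_ball_and_dist_le_sub_of_dist_succ_le_sub hstep (hV_nonneg _ hx0δ) hx0V k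
  have hkδ : x k ∈ ball xb δ := ball_subset_ball (by linarith) hk
  refine ⟨hkδ, ?_⟩
  rw [← dist_eq_norm, dist_comm]
  have hV_twice : 4 * c_L / (1 - α) * (f (x 0) - f xb) ^ (1 - α) = 2 * V (x 0) := by
    rw [hV]; ring
  linarith [hV_nonneg _ hkδ, hV_nonneg _ hx0δ,
    show 0 ≤ 2 / L * ‖gradient f (x 0)‖ by positivity]
end

section
/- Let E be a real inner product space, let g : E → ℝ be differentiable at a point x, let x̄ ∈ E with value g* = g(x̄), and let p ≥ 1 be a real number. Suppose x satisfies: g(x) − g* > 0, the aiming inequality ⟨∇g(x), x − x̄⟩ ≥ g(x) − g*, the lower growth bound g(x) − g* ≥ a · ‖x − x̄‖^p, and the gradient bound ‖∇g(x)‖ ≤ b · ‖x − x̄‖^{p−1}, for constants 0 < a ≤ b. Then the Polyak gradient step x⁺ := x − ((g(x) − g*)/‖∇g(x)‖²)·∇g(x) satisfies ‖x⁺ − x̄‖² ≤ ‖x − x̄‖² − ((g(x) − g*)/‖∇g(x)‖)² ≤ (1 − a²/b²) · ‖x − x̄‖². In particular, a single Polyak step shrinks the distance to x̄ by the constant factor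 √(1 − a²/b²) < 1 when a < b (and sends x to x̄ when a = b). -/
/-!
Write `d = x - xb`, `v = ∇g(x)` and `Δ = g x - g xb`. Expanding the square,
`‖d - (Δ/‖v‖²) v‖² = ‖d‖² - 2 (Δ/‖v‖²) ⟪v, d⟫ + Δ²/‖v‖²`, and the aiming inequality
`Δ ≤ ⟪v, d⟫` turns this into at most `‖d‖² - (Δ/‖v‖)²`. The growth and gradient bounds
give `Δ/‖v‖ ≥ a‖d‖^p / (b‖d‖^(p-1)) = (a/b)‖d‖`, which yields the contraction factor.
-/

open scoped RealInnerProductSpace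

theorem norm_sub_polyak_smul_sq_le {E : Type*} [NormedAddCommGroup E] [InnerProductSpace ℝ E]
    {Δ : ℝ} {v d : E} (hΔ : 0 ≤ Δ) (haim : Δ ≤ ⟪v, d⟫) :
    ‖d - (Δ / ‖v‖ ^ 2) • v‖ ^ 2 ≤ ‖d‖ ^ 2 - (Δ / ‖v‖) ^ 2 := by
  rcases eq_or_ne v 0 with rfl | hv_ne
  · simp -- `Δ / 0 = 0`, so both sides are `‖d‖ ^ 2`
  have hv : 0 < ‖v‖ := norm_pos_iff.2 hv_ne
  have hstep : 0 ≤ Δ / ‖v‖ ^ 2 := by positivity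
  calc ‖d - (Δ / ‖v‖ ^ 2) • v‖ ^ 2
      = ‖d‖ ^ 2 - 2 * (Δ / ‖v‖ ^ 2) * ⟪v, d⟫ + (Δ / ‖v‖ ^ 2) ^ 2 * ‖v‖ ^ 2 := by
        rw [norm_sub_sq_real, real_inner_smul_right, norm_smul, Real.norm_of_nonneg hstep,
          real_inner_comm, mul_pow]
        ring
    _ ≤ ‖d‖ ^ 2 - 2 * (Δ / ‖v‖ ^ 2) * Δ + (Δ / ‖v‖ ^ 2) ^ 2 * ‖v‖ ^ 2 := by
        gcongr
    _ = ‖d‖ ^ 2 - (Δ / ‖v‖) ^ 2 := by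
        field_simp
        ring

theorem mul_div_le_div_of_growth_of_le {r n Δ a b p : ℝ} (hr : 0 < r) (hn : 0 < n)
    (ha : 0 ≤ a) (hgrowth : a * r ^ p ≤ Δ) (hgrad : n ≤ b * r ^ (p - 1)) :
    a * r / b ≤ Δ / n := by
  have hrp : r ^ p = r ^ (p - 1) * r := by
    rw [← Real.rpow_add_one hr.ne', sub_add_cancel]
  calc a * r / b = a * r ^ p / (b * r ^ (p - 1)) := by
        rw [hrp]
        field_simp
    _ ≤ Δ / n := div_le_div₀ ((by positivity : 0 ≤ a * r ^ p).trans hgrowth) hgrowth hn hgrad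

theorem sq_sub_div_sq_le_of_growth_of_le {r n Δ a b p : ℝ} (hr : 0 < r) (hn : 0 < n)
    (ha : 0 ≤ a) (hgrowth : a * r ^ p ≤ Δ) (hgrad : n ≤ b * r ^ (p - 1)) :
    r ^ 2 - (Δ / n) ^ 2 ≤ (1 - a ^ 2 / b ^ 2) * r ^ 2 := by
  have hb : 0 < b := pos_of_mul_pos_left (hn.trans_le hgrad) (Real.rpow_pos_of_pos hr _).le
  have hkey := mul_div_le_div_of_growth_of_le hr hn ha hgrowth hgrad
  have hsq : (a * r / b) ^ 2 ≤ (Δ / n) ^ 2 := pow_le_pow_left₀ (by positivity) hkey 2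
  calc r ^ 2 - (Δ / n) ^ 2 ≤ r ^ 2 - (a * r / b) ^ 2 := by linarith
    _ = (1 - a ^ 2 / b ^ 2) * r ^ 2 := by field_simp

theorem polyak_step_contracts_general
    {E : Type*} [NormedAddCommGroup E] [InnerProductSpace ℝ E] [CompleteSpace E]
    (g : E → ℝ) (x xb : E)
    (p : ℝ) (a b : ℝ) (ha : 0 < a)
    (hpos : 0 < g x - g xb)
    (haim : g x - g xb ≤ ⟪gradient g x, x - xb⟫)
    (hgrowth : a * ‖x - xb‖ ^ p ≤ g x - g xb)
    (hgrad : ‖gradient g x‖ ≤ b * ‖x - xb‖ ^ (p - 1)) :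
    ‖(x - ((g x - g xb) / ‖gradient g x‖ ^ 2) • gradient g x) - xb‖ ^ 2 ≤
        ‖x - xb‖ ^ 2 - ((g x - g xb) / ‖gradient g x‖) ^ 2 ∧
      ‖x - xb‖ ^ 2 - ((g x - g xb) / ‖gradient g x‖) ^ 2 ≤
        (1 - a ^ 2 / b ^ 2) * ‖x - xb‖ ^ 2 := by
  have hinner : 0 < ⟪gradient g x, x - xb⟫ := hpos.trans_le haim
  have hd : 0 < ‖x - xb‖ :=
    norm_pos_iff.2 fun h ↦ by simp [h] at hinner
  have hv : 0 < ‖gradient g x‖ :=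
    norm_pos_iff.2 fun h ↦ by simp [h] at hinner
  refine ⟨?_, sq_sub_div_sq_le_of_growth_of_le hd hv ha.le hgrowth hgrad⟩
  rw [sub_right_comm]
  exact norm_sub_polyak_smul_sq_le hpos.le haim

/-- **Contraction of a single Polyak step.**
Let `g : E → ℝ` be differentiable at `x`, with target point `xb` and value `g xb`.
If `g x − g xb > 0`, the aiming inequality `⟨∇g(x), x − xb⟩ ≥ g x − g xb` holds,
`g x − g xb ≥ a‖x − xb‖^p`, and `‖∇g(x)‖ ≤ b‖x − xb‖^{p−1}` with `0 < a ≤ b` and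
`p ≥ 1`, then the Polyak step `x⁺ = x − ((g x − g xb)/‖∇g(x)‖²) ∇g(x)` satisfies
`‖x⁺ − xb‖² ≤ ‖x − xb‖² − ((g x − g xb)/‖∇g(x)‖)² ≤ (1 − a²/b²)‖x − xb‖²`. -/
theorem polyak_step_contracts
    {E : Type*} [NormedAddCommGroup E] [InnerProductSpace ℝ E] [CompleteSpace E]
    (g : E → ℝ) (x xb : E) (hdiff : DifferentiableAt ℝ g x)
    (p : ℝ) (hp : 1 ≤ p) (a b : ℝ) (ha : 0 < a) (hab : a ≤ b)
    (hpos : 0 < g x - g xb)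
    (haim : g x - g xb ≤ ⟪gradient g x, x - xb⟫)
    (hgrowth : a * ‖x - xb‖ ^ p ≤ g x - g xb)
    (hgrad : ‖gradient g x‖ ≤ b * ‖x - xb‖ ^ (p - 1)) :
    ‖(x - ((g x - g xb) / ‖gradient g x‖ ^ 2) • gradient g x) - xb‖ ^ 2 ≤
        ‖x - xb‖ ^ 2 - ((g x - g xb) / ‖gradient g x‖) ^ 2 ∧
      ‖x - xb‖ ^ 2 - ((g x - g xb) / ‖gradient g x‖) ^ 2 ≤
        (1 - a ^ 2 / b ^ 2) * ‖x - xb‖ ^ 2 :=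
  polyak_step_contracts_general g x xb p a b ha hpos haim hgrowth hgrad
end

section
/- For every B = (P; Q) ∈ M (i.e. PPᵀ = D and PQᵀ = 0): the point B̄ = (P; 0) lies in S and is a nearest point of B in S; the gradient of f at B (with respect to the Frobenius inner product) is ∇f(B) = 4(BBᵀ − X)B, which in block form equals (0; 4QQᵀQ); and the inequalities ⟨∇f(B), B − B̄⟩_F = 4‖QQᵀ‖_F² = 4f(B) ≥ f(B) and ‖∇f(B)‖_F ≤ 4 · dist³(B, S) hold. -/
open Matrix

/-- The Frobenius norm of a real matrix. -/
noncomputable def frobNorm {m n : ℕ} (A : Matrix (Fin m) (Fin n) ℝ) : ℝ :=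
  Real.sqrt (∑ i, ∑ j, A i j ^ 2)

/-- Points of `ℝ^{d×k}` are written in block form `B = (P; Q)`; this is the Frobenius
distance between two such block pairs. -/
noncomputable def frobDist {r dr k : ℕ}
    (B C : Matrix (Fin r) (Fin k) ℝ × Matrix (Fin dr) (Fin k) ℝ) : ℝ :=
  Real.sqrt (frobNorm (B.1 - C.1) ^ 2 + frobNorm (B.2 - C.2) ^ 2)

/-- Frobenius distance from a block pair to a set of block pairs. -/
noncomputable def frobDistSet {r dr k : ℕ}
    (B : Matrix (Fin r) (Fin k) ℝ × Matrix (Fin dr) (Fin k) ℝ)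
    (S : Set (Matrix (Fin r) (Fin k) ℝ × Matrix (Fin dr) (Fin k) ℝ)) : ℝ :=
  sInf (frobDist B '' S)

/-- The matrix-factorization objective `f(B) = ‖BBᵀ − X‖_F²` in block form:
`f(P,Q) = ‖PPᵀ − D‖_F² + 2‖PQᵀ‖_F² + ‖QQᵀ‖_F²`. -/
noncomputable def mfObj {r dr k : ℕ} (D : Matrix (Fin r) (Fin r) ℝ)
    (B : Matrix (Fin r) (Fin k) ℝ × Matrix (Fin dr) (Fin k) ℝ) : ℝ :=
  frobNorm (B.1 * B.1ᵀ - D) ^ 2 + 2 * frobNorm (B.1 * B.2ᵀ) ^ 2 +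
    frobNorm (B.2 * B.2ᵀ) ^ 2

/-- The solution set `S = {(P;Q) : PPᵀ = D, Q = 0}`. -/
def mfSol {r dr k : ℕ} (D : Matrix (Fin r) (Fin r) ℝ) :
    Set (Matrix (Fin r) (Fin k) ℝ × Matrix (Fin dr) (Fin k) ℝ) :=
  {B | B.1 * B.1ᵀ = D ∧ B.2 = 0}

/-- The ravine `M = {(P;Q) : PPᵀ = D, PQᵀ = 0}`. -/
def mfRavine {r dr k : ℕ} (D : Matrix (Fin r) (Fin r) ℝ) :
    Set (Matrix (Fin r) (Fin k) ℝ × Matrix (Fin dr) (Fin k) ℝ) :=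
  {B | B.1 * B.1ᵀ = D ∧ B.1 * B.2ᵀ = 0}


/-- The trace (Frobenius) inner product of two real matrices. -/
noncomputable def frobInner {m n : ℕ} (A B : Matrix (Fin m) (Fin n) ℝ) : ℝ :=
  ∑ i, ∑ j, A i j * B i j

attribute [local instance] Matrix.normedAddCommGroup Matrix.normedSpace

/-!
On the ravine `PPᵀ - D` and `PQᵀ` vanish, so `f(B) = ‖QQᵀ‖²`, and the first two terms of `f`,
being squared norms of differentiable maps that vanish at `B`, have zero derivative there.
The last term differentiates to `W ↦ 2⟨QQᵀ, WQᵀ + QWᵀ⟩ = 4⟨QQᵀQ, W⟩`, whose value at `W = Q`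
is `4‖QQᵀ‖²`. Every point of `S` has second block `0`, so `(P; 0)` is a nearest point, at
distance `‖Q‖`, and submultiplicativity of the Frobenius norm gives `‖QQᵀQ‖ ≤ ‖Q‖³`.
-/

section FrobeniusNorm
variable {m n p : ℕ}

lemma frobNorm_nonneg (A : Matrix (Fin m) (Fin n) ℝ) : 0 ≤ frobNorm A :=
  Real.sqrt_nonneg _

lemma frobNorm_zero : frobNorm (0 : Matrix (Fin m) (Fin n) ℝ) = 0 := by
  simp [frobNorm]

-- The ambient matrix norm is the entrywise sup norm, so Mathlib's Frobenius norm is named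
-- explicitly.
lemma frobNorm_eq_frobenius_norm (A : Matrix (Fin m) (Fin n) ℝ) :
    frobNorm A = @Norm.norm _ Matrix.frobeniusNormedAddCommGroup.toNorm A := by
  let _ := @Matrix.frobeniusNormedAddCommGroup (Fin m) (Fin n) ℝ _ _ _
  rw [Matrix.frobenius_norm_def, frobNorm, Real.sqrt_eq_rpow]
  simp

lemma frobNorm_mul_le (A : Matrix (Fin m) (Fin n) ℝ) (B : Matrix (Fin n) (Fin p) ℝ) :
    frobNorm (A * B) ≤ frobNorm A * frobNorm B := by
  simp only [frobNorm_eq_frobenius_norm]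
  exact Matrix.frobenius_norm_mul A B

lemma frobNorm_transpose (A : Matrix (Fin m) (Fin n) ℝ) : frobNorm Aᵀ = frobNorm A := by
  simp only [frobNorm_eq_frobenius_norm]
  exact Matrix.frobenius_norm_transpose A

lemma frobNorm_smul (c : ℝ) (A : Matrix (Fin m) (Fin n) ℝ) :
    frobNorm (c • A) = |c| * frobNorm A := by
  let _ := @Matrix.frobeniusNormedAddCommGroup (Fin m) (Fin n) ℝ _ _ _
  let _ := @Matrix.frobeniusNormedSpace ℝ (Fin m) (Fin n) ℝ _ _ _
  simp only [frobNorm_eq_frobenius_norm]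
  rw [norm_smul, Real.norm_eq_abs]

lemma frobNorm_mul_transpose_mul_self_le (Q : Matrix (Fin m) (Fin n) ℝ) :
    frobNorm (Q * Qᵀ * Q) ≤ frobNorm Q ^ 3 :=
  calc frobNorm (Q * Qᵀ * Q) ≤ frobNorm (Q * Qᵀ) * frobNorm Q := frobNorm_mul_le _ _
    _ ≤ frobNorm Q * frobNorm Qᵀ * frobNorm Q :=
        mul_le_mul_of_nonneg_right (frobNorm_mul_le _ _) (frobNorm_nonneg _)
    _ = frobNorm Q ^ 3 := by rw [frobNorm_transpose]; ring

end FrobeniusNorm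

section FrobeniusInner
variable {m n p : ℕ}

lemma frobInner_comm (A B : Matrix (Fin m) (Fin n) ℝ) : frobInner A B = frobInner B A := by
  simp only [frobInner, mul_comm]

lemma frobInner_self (A : Matrix (Fin m) (Fin n) ℝ) : frobInner A A = frobNorm A ^ 2 := by
  rw [frobNorm, Real.sq_sqrt (by positivity)]
  simp only [frobInner, sq]

lemma frobInner_zero_left (A : Matrix (Fin m) (Fin n) ℝ) : frobInner 0 A = 0 := by
  simp [frobInner]

lemma frobInner_smul_left (c : ℝ) (A B : Matrix (Fin m) (Fin n) ℝ) :
    frobInner (c • A) B = c * frobInner A B := by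
  simp only [frobInner, Matrix.smul_apply, smul_eq_mul, Finset.mul_sum, mul_assoc]

lemma frobInner_eq_trace (A B : Matrix (Fin m) (Fin n) ℝ) : frobInner A B = (A * Bᵀ).trace := by
  simp [frobInner, Matrix.trace, Matrix.mul_apply]

lemma frobInner_transpose (A B : Matrix (Fin m) (Fin n) ℝ) : frobInner Aᵀ Bᵀ = frobInner A B :=
  Finset.sum_comm

lemma frobInner_mul_transpose_right (A : Matrix (Fin m) (Fin n) ℝ) (B : Matrix (Fin m) (Fin p) ℝ)
    (C : Matrix (Fin n) (Fin p) ℝ) : frobInner A (B * Cᵀ) = frobInner (A * C) B := by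
  rw [frobInner_eq_trace, frobInner_eq_trace, transpose_mul, transpose_transpose,
    Matrix.mul_assoc]

lemma frobInner_mul_transpose_mul_self (Q : Matrix (Fin m) (Fin n) ℝ) :
    frobInner (Q * Qᵀ * Q) Q = frobNorm (Q * Qᵀ) ^ 2 := by
  rw [← frobInner_mul_transpose_right, frobInner_self]

lemma isBilinearMap_frobInner : IsBilinearMap ℝ (frobInner (m := m) (n := n)) where
  add_left _ _ _ := by simp only [frobInner, Matrix.add_apply, add_mul, Finset.sum_add_distrib]
  smul_left := frobInner_smul_left
  add_right _ _ _ := by simp only [frobInner, Matrix.add_apply, mul_add, Finset.sum_add_distrib]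
  smul_right c A B := by rw [frobInner_comm, frobInner_smul_left, frobInner_comm]; rfl

lemma isBilinearMap_mul_transpose :
    IsBilinearMap ℝ fun (A : Matrix (Fin m) (Fin n) ℝ) (B : Matrix (Fin p) (Fin n) ℝ) =>
      A * Bᵀ where
  add_left := by intros; simp [Matrix.add_mul]
  smul_left := by intros; simp
  add_right := by intros; simp [Matrix.mul_add]
  smul_right := by intros; simp

end FrobeniusInner

section Derivative
variable {m n p : ℕ} {X : Type*} [NormedAddCommGroup X] [NormedSpace ℝ X]

noncomputable def frobInnerL (A : Matrix (Fin m) (Fin n) ℝ) : Matrix (Fin m) (Fin n) ℝ →L[ℝ] ℝ :=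
  isBilinearMap_frobInner.toContinuousBilinearMap A

@[simp] lemma frobInnerL_apply (A B : Matrix (Fin m) (Fin n) ℝ) :
    frobInnerL A B = frobInner A B :=
  rfl

lemma differentiable_mul_transpose :
    Differentiable ℝ fun P : Matrix (Fin m) (Fin n) ℝ × Matrix (Fin p) (Fin n) ℝ => P.1 * P.2ᵀ :=
  isBilinearMap_mul_transpose.toContinuousBilinearMap.isBoundedBilinearMap.differentiableAt

lemma HasFDerivAt.frobNorm_sq {g : X → Matrix (Fin m) (Fin n) ℝ}
    {g' : X →L[ℝ] Matrix (Fin m) (Fin n) ℝ} {x : X} (hg : HasFDerivAt g g' x) :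
    HasFDerivAt (fun y => frobNorm (g y) ^ 2) ((2 : ℝ) • (frobInnerL (g x)).comp g') x := by
  simp only [← frobInner_self]
  refine (isBilinearMap_frobInner.toContinuousBilinearMap.hasFDerivAt_of_bilinear hg hg)
    |>.congr_fderiv ?_
  ext V
  change frobInner (g x) (g' V) + frobInner (g' V) (g x) = 2 * frobInner (g x) (g' V)
  rw [frobInner_comm (g' V), two_mul]

lemma hasFDerivAt_frobNorm_sq_of_eq_zero {g : X → Matrix (Fin m) (Fin n) ℝ} {x : X}
    (hg : DifferentiableAt ℝ g x) (h0 : g x = 0) :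
    HasFDerivAt (fun y => frobNorm (g y) ^ 2) (0 : X →L[ℝ] ℝ) x := by
  refine hg.hasFDerivAt.frobNorm_sq.congr_fderiv ?_
  ext V
  simp [h0, frobInner_zero_left]

lemma hasFDerivAt_frobNorm_mul_transpose_self_sq (Q : Matrix (Fin m) (Fin n) ℝ) :
    HasFDerivAt (fun Q : Matrix (Fin m) (Fin n) ℝ => frobNorm (Q * Qᵀ) ^ 2)
      (frobInnerL ((4 : ℝ) • (Q * Qᵀ * Q))) Q := by
  have hprod := isBilinearMap_mul_transpose.toContinuousBilinearMap.hasFDerivAt_of_bilinear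
    (hasFDerivAt_id Q) (hasFDerivAt_id Q)
  refine hprod.frobNorm_sq.congr_fderiv ?_
  ext W
  change 2 * frobInner (Q * Qᵀ) (Q * Wᵀ + W * Qᵀ) = frobInner ((4 : ℝ) • (Q * Qᵀ * Q)) W
  -- `Q * Qᵀ` is symmetric, so both halves of the product rule contribute equally.
  have hsymm : frobInner (Q * Qᵀ) (Q * Wᵀ) = frobInner (Q * Qᵀ) (W * Qᵀ) := by
    rw [← frobInner_transpose, transpose_mul, transpose_mul, transpose_transpose,
      transpose_transpose]
  rw [isBilinearMap_frobInner.add_right, hsymm, frobInner_mul_transpose_right,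
    frobInner_smul_left]
  ring

end Derivative

section MatrixFactorization
variable {r dr k : ℕ} {D : Matrix (Fin r) (Fin r) ℝ}
  {B : Matrix (Fin r) (Fin k) ℝ × Matrix (Fin dr) (Fin k) ℝ}

lemma mfObj_of_mem_mfRavine (hB : B ∈ mfRavine D) : mfObj D B = frobNorm (B.2 * B.2ᵀ) ^ 2 := by
  simp [mfObj, hB.1, hB.2, frobNorm]

lemma hasFDerivAt_mfObj_of_mem_mfRavine (hB : B ∈ mfRavine D) :
    HasFDerivAt (mfObj D)
      ((frobInnerL ((4 : ℝ) • (B.2 * B.2ᵀ * B.2))).comp (ContinuousLinearMap.snd ℝ _ _)) B := by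
  have hPP : HasFDerivAt (fun B : Matrix (Fin r) (Fin k) ℝ × Matrix (Fin dr) (Fin k) ℝ =>
      frobNorm (B.1 * B.1ᵀ - D) ^ 2) 0 B :=
    hasFDerivAt_frobNorm_sq_of_eq_zero
      (((differentiable_mul_transpose _).comp B
        (differentiableAt_fst.prodMk differentiableAt_fst)).sub_const D) (by simp [hB.1])
  have hPQ : HasFDerivAt (fun B : Matrix (Fin r) (Fin k) ℝ × Matrix (Fin dr) (Fin k) ℝ =>
      frobNorm (B.1 * B.2ᵀ) ^ 2) 0 B :=
    hasFDerivAt_frobNorm_sq_of_eq_zero (differentiable_mul_transpose B) hB.2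
  have hQQ := (hasFDerivAt_frobNorm_mul_transpose_self_sq B.2).comp B hasFDerivAt_snd
  refine ((hPP.add (hPQ.const_mul 2)).add hQQ).congr_fderiv (DFunLike.ext _ _ fun V => ?_)
  change 0 + 2 * 0 + frobInner ((4 : ℝ) • (B.2 * B.2ᵀ * B.2)) V.2 =
    frobInner ((4 : ℝ) • (B.2 * B.2ᵀ * B.2)) V.2
  ring

lemma frobDist_fst_eq (C : Matrix (Fin dr) (Fin k) ℝ) :
    frobDist B (B.1, C) = frobNorm (B.2 - C) := by
  rw [frobDist, sub_self, frobNorm_zero, zero_pow two_ne_zero, zero_add,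
    Real.sqrt_sq (frobNorm_nonneg _)]

lemma frobNorm_snd_sub_le_frobDist (C : Matrix (Fin r) (Fin k) ℝ × Matrix (Fin dr) (Fin k) ℝ) :
    frobNorm (B.2 - C.2) ≤ frobDist B C :=
  Real.le_sqrt_of_sq_le (le_add_of_nonneg_left (sq_nonneg _))

lemma isLeast_frobDist_mfSol (hB : B.1 * B.1ᵀ = D) :
    IsLeast (frobDist B '' mfSol D) (frobNorm B.2) := by
  refine ⟨⟨(B.1, 0), ⟨hB, rfl⟩, by rw [frobDist_fst_eq, sub_zero]⟩, ?_⟩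
  rintro _ ⟨C, hC, rfl⟩
  simpa [hC.2] using frobNorm_snd_sub_le_frobDist C

lemma frobDistSet_mfSol (hB : B.1 * B.1ᵀ = D) : frobDistSet B (mfSol D) = frobNorm B.2 :=
  (isLeast_frobDist_mfSol hB).csInf_eq

end MatrixFactorization

theorem matrix_factorization_aiming_and_gradient_bound_general
    (r d k : ℕ) (Dv : Fin r → ℝ) :
    ∀ B : Matrix (Fin r) (Fin k) ℝ × Matrix (Fin (d - r)) (Fin k) ℝ,
      B ∈ mfRavine (Matrix.diagonal Dv) →
      (B.1, (0 : Matrix (Fin (d - r)) (Fin k) ℝ)) ∈ mfSol (Matrix.diagonal Dv) ∧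
      frobDist B (B.1, (0 : Matrix (Fin (d - r)) (Fin k) ℝ)) =
        frobDistSet B (mfSol (Matrix.diagonal Dv)) ∧
      DifferentiableAt ℝ (mfObj (Matrix.diagonal Dv)) B ∧
      (∀ V : Matrix (Fin r) (Fin k) ℝ × Matrix (Fin (d - r)) (Fin k) ℝ,
        fderiv ℝ (mfObj (Matrix.diagonal Dv)) B V =
          frobInner ((0 : Matrix (Fin r) (Fin k) ℝ)) V.1 +
            frobInner ((4 : ℝ) • (B.2 * B.2ᵀ * B.2)) V.2) ∧
      frobInner ((4 : ℝ) • (B.2 * B.2ᵀ * B.2)) B.2 = 4 * frobNorm (B.2 * B.2ᵀ) ^ 2 ∧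
      4 * frobNorm (B.2 * B.2ᵀ) ^ 2 = 4 * mfObj (Matrix.diagonal Dv) B ∧
      mfObj (Matrix.diagonal Dv) B ≤ frobInner ((4 : ℝ) • (B.2 * B.2ᵀ * B.2)) B.2 ∧
      frobNorm ((4 : ℝ) • (B.2 * B.2ᵀ * B.2)) ≤
        4 * frobDistSet B (mfSol (Matrix.diagonal Dv)) ^ 3 := by
  intro B hB
  have hderiv := hasFDerivAt_mfObj_of_mem_mfRavine hB
  have haim : frobInner ((4 : ℝ) • (B.2 * B.2ᵀ * B.2)) B.2 = 4 * frobNorm (B.2 * B.2ᵀ) ^ 2 := by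
    rw [frobInner_smul_left, frobInner_mul_transpose_mul_self]
  have hobj := mfObj_of_mem_mfRavine hB
  refine ⟨⟨hB.1, rfl⟩, by rw [frobDist_fst_eq, sub_zero, frobDistSet_mfSol hB.1],
    hderiv.differentiableAt, fun V => ?_, haim, by rw [hobj], ?_, ?_⟩
  · rw [hderiv.fderiv, frobInner_zero_left, zero_add]
    rfl
  · rw [haim, hobj]
    exact le_mul_of_one_le_left (sq_nonneg _) (by norm_num)
  · rw [frobDistSet_mfSol hB.1, frobNorm_smul, abs_of_pos four_pos]
    gcongr
    exact frobNorm_mul_transpose_mul_self_le B.2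

/-- **Aiming and gradient bound for matrix factorization on the ravine.**
For every `B = (P;Q) ∈ M`: the point `B̄ = (P;0)` lies in `S` and is a nearest point
of `B` in `S`; the gradient of `f` at `B` with respect to the Frobenius inner product
is `(0; 4QQᵀQ)` (expressed here through the Fréchet derivative); and
`⟨∇f(B), B − B̄⟩_F = 4‖QQᵀ‖_F² = 4 f(B) ≥ f(B)` and `‖∇f(B)‖_F ≤ 4 dist³(B, S)`. -/
theorem matrix_factorization_aiming_and_gradient_bound
    (r d k : ℕ) (hr : 0 < r) (hrd : r < d) (hrk : r ≤ k)
    (Dv : Fin r → ℝ) (hDv : ∀ i, 0 < Dv i) :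
    ∀ B : Matrix (Fin r) (Fin k) ℝ × Matrix (Fin (d - r)) (Fin k) ℝ,
      B ∈ mfRavine (Matrix.diagonal Dv) →
      (B.1, (0 : Matrix (Fin (d - r)) (Fin k) ℝ)) ∈ mfSol (Matrix.diagonal Dv) ∧
      frobDist B (B.1, (0 : Matrix (Fin (d - r)) (Fin k) ℝ)) =
        frobDistSet B (mfSol (Matrix.diagonal Dv)) ∧
      DifferentiableAt ℝ (mfObj (Matrix.diagonal Dv)) B ∧
      (∀ V : Matrix (Fin r) (Fin k) ℝ × Matrix (Fin (d - r)) (Fin k) ℝ,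
        fderiv ℝ (mfObj (Matrix.diagonal Dv)) B V =
          frobInner ((0 : Matrix (Fin r) (Fin k) ℝ)) V.1 +
            frobInner ((4 : ℝ) • (B.2 * B.2ᵀ * B.2)) V.2) ∧
      frobInner ((4 : ℝ) • (B.2 * B.2ᵀ * B.2)) B.2 = 4 * frobNorm (B.2 * B.2ᵀ) ^ 2 ∧
      4 * frobNorm (B.2 * B.2ᵀ) ^ 2 = 4 * mfObj (Matrix.diagonal Dv) B ∧
      mfObj (Matrix.diagonal Dv) B ≤ frobInner ((4 : ℝ) • (B.2 * B.2ᵀ * B.2)) B.2 ∧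
      frobNorm ((4 : ℝ) • (B.2 * B.2ᵀ * B.2)) ≤
        4 * frobDistSet B (mfSol (Matrix.diagonal Dv)) ^ 3 :=
  matrix_factorization_aiming_and_gradient_bound_general r d k Dv
end

section
/- Let h : ℝ^{d×d} → ℝ be C²-smooth and define g : ℝ^{d×k} → ℝ by g(B) = h(BBᵀ). Then for any B₁, B₂ ∈ ℝ^{d×k} with B₁B₁ᵀ = B₂B₂ᵀ, the Hessians of g at B₁ and B₂ have equal rank: rank(∇²g(B₁)) = rank(∇²g(B₂)). In particular, the Hessian ∇²g has constant rank on any set of the form {B ∈ ℝ^{d×k} : BBᵀ = X} for a fixed matrix X. -/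
/-!
The fiber `{B : B Bᵀ = X}` is a single orbit of `O(k)` acting by right multiplication: two
factorizations of the same Gram matrix have rows with the same inner products, so the linear
isometry matching them extends to all of `ℝᵏ`. Since `g(B) = h(B Bᵀ)` is invariant under this
linear action, differentiating `g ∘ e = g` twice conjugates the Hessian at `B` to the Hessian at
`e B` by linear isomorphisms, which preserves rank.
-/

open Matrix

attribute [local instance] Matrix.normedAddCommGroup Matrix.normedSpace

namespace LinearMap

universe w

variable {K V : Type*} [Ring K] [AddCommGroup V] [Module K V]

theorem rank_comp_linearEquiv {V' V'' : Type*} [AddCommGroup V'] [Module K V'] [AddCommGroup V'']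
    [Module K V''] (f : V' →ₗ[K] V'') (e : V ≃ₗ[K] V') :
    rank (f ∘ₗ e.toLinearMap) = rank f := by
  rw [rank, rank, range_comp_of_range_eq_top _ e.range]

theorem rank_linearEquiv_comp {V' V'' : Type w} [AddCommGroup V'] [Module K V'] [AddCommGroup V'']
    [Module K V''] (e : V' ≃ₗ[K] V'') (f : V →ₗ[K] V') : rank (e.toLinearMap ∘ₗ f) = rank f := by
  rw [rank, rank, range_comp]
  exact e.rank_map_eq _

end LinearMap

section Invariance

variable {𝕜 E F : Type*} [NontriviallyNormedField 𝕜] [NormedAddCommGroup E] [NormedSpace 𝕜 E]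
  [NormedAddCommGroup F] [NormedSpace 𝕜 F]

theorem fderiv_comp_continuousLinearEquiv_of_comp_eq {f : E → F} {e : E ≃L[𝕜] E}
    (hf : f ∘ e = f) : fderiv 𝕜 f ∘ e = e.arrowCongr (.refl 𝕜 F) ∘ fderiv 𝕜 f := by
  funext x
  have hx : fderiv 𝕜 f x = (fderiv 𝕜 f (e x)).comp (e : E →L[𝕜] E) := by
    conv_lhs => rw [← hf]
    exact e.comp_right_fderiv
  ext v
  simp [hx]

theorem rank_fderiv_fderiv_apply_eq_of_comp_eq {f : E → F} {e : E ≃L[𝕜] E} (hf : f ∘ e = f)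
    (x : E) :
    (fderiv 𝕜 (fderiv 𝕜 f) (e x)).toLinearMap.rank =
      (fderiv 𝕜 (fderiv 𝕜 f) x).toLinearMap.rank := by
  have hconj : (fderiv 𝕜 (fderiv 𝕜 f) (e x)).comp (e : E →L[𝕜] E) =
      (e.arrowCongr (.refl 𝕜 F) : (E →L[𝕜] F) →L[𝕜] E →L[𝕜] F).comp
        (fderiv 𝕜 (fderiv 𝕜 f) x) := by
    rw [← e.comp_right_fderiv, ← ContinuousLinearEquiv.comp_fderiv,
      fderiv_comp_continuousLinearEquiv_of_comp_eq hf]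
  have hrank := congrArg (fun L => L.toLinearMap.rank) hconj
  simp only [ContinuousLinearMap.toLinearMap_comp,
    ContinuousLinearEquiv.toLinearMap_toContinuousLinearMap] at hrank
  rwa [LinearMap.rank_comp_linearEquiv, LinearMap.rank_linearEquiv_comp] at hrank

end Invariance

theorem LinearMap.exists_linearIsometry_comp_eq_of_inner_eq {𝕜 V W : Type*} [RCLike 𝕜]
    [NormedAddCommGroup V] [InnerProductSpace 𝕜 V] [FiniteDimensional 𝕜 V] [AddCommGroup W]
    [Module 𝕜 W] (T₁ T₂ : W →ₗ[𝕜] V)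
    (h : ∀ x y, inner 𝕜 (T₁ x) (T₁ y) = inner 𝕜 (T₂ x) (T₂ y)) :
    ∃ L : V →ₗᵢ[𝕜] V, ∀ x, L (T₁ x) = T₂ x := by
  have hker : ker T₁ ≤ ker T₂ := fun x hx => by
    rw [mem_ker] at hx ⊢
    rw [← inner_self_eq_zero (𝕜 := 𝕜), ← h, hx, inner_zero_left]
  let φ : range T₁ →ₗ[𝕜] V := (ker T₁).liftQ T₂ hker ∘ₗ T₁.quotKerEquivRange.symm.toLinearMap
  have hφ : ∀ x, φ ⟨T₁ x, mem_range_self T₁ x⟩ = T₂ x := fun x => by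
    simp [φ, quotKerEquivRange_symm_apply_image]
  have hφ_inner : ∀ s t, inner 𝕜 (φ s) (φ t) = inner 𝕜 s t := by
    rintro ⟨-, x, rfl⟩ ⟨-, y, rfl⟩
    rw [hφ, hφ, ← h]
    rfl
  refine ⟨(φ.isometryOfInner hφ_inner).extend, fun x => ?_⟩
  rw [← hφ]
  exact LinearIsometry.extend_apply _ ⟨T₁ x, _⟩

namespace Matrix

section UnitaryGroup

variable {m n R : Type*} [Fintype n] [DecidableEq n] [CommRing R] [StarRing R]

def UnitaryGroup.mulRightLinearEquiv (U : unitaryGroup n R) : Matrix m n R ≃ₗ[R] Matrix m n R where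
  toFun B := B * U.1
  invFun B := B * star U.1
  map_add' B C := Matrix.add_mul B C U.1
  map_smul' c B := Matrix.smul_mul c B U.1
  left_inv B := by simp [Matrix.mul_assoc]
  right_inv B := by simp [Matrix.mul_assoc]

theorem mul_mul_conjTranspose_of_mem_unitaryGroup {U : Matrix n n R}
    (hU : U ∈ unitaryGroup n R) (B : Matrix m n R) : B * U * (B * U)ᴴ = B * Bᴴ := by
  rw [conjTranspose_mul, Matrix.mul_assoc, ← Matrix.mul_assoc U, ← star_eq_conjTranspose,
    mem_unitaryGroup_iff.mp hU, Matrix.one_mul]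

end UnitaryGroup

variable {𝕜 m n : Type*} [RCLike 𝕜] [Fintype m] [DecidableEq m] [Fintype n] [DecidableEq n]

theorem inner_toEuclideanLin_conjTranspose (A : Matrix m n 𝕜) (x y : EuclideanSpace 𝕜 m) :
    inner 𝕜 (toEuclideanLin Aᴴ x) (toEuclideanLin Aᴴ y) =
      inner 𝕜 x (toEuclideanLin (A * Aᴴ) y) := by
  rw [toLpLin_mul _ 2, LinearMap.comp_apply, toEuclideanLin_conjTranspose_eq_adjoint,
    LinearMap.adjoint_inner_left]

theorem exists_mem_unitaryGroup_eq_mul_of_mul_conjTranspose_eq {A B : Matrix m n 𝕜}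
    (h : A * Aᴴ = B * Bᴴ) : ∃ U ∈ unitaryGroup n 𝕜, B = A * U := by
  obtain ⟨L, hL⟩ := (toEuclideanLin Aᴴ).exists_linearIsometry_comp_eq_of_inner_eq
    (toEuclideanLin Bᴴ) fun x y => by
      rw [inner_toEuclideanLin_conjTranspose, inner_toEuclideanLin_conjTranspose, h]
  set Q := toEuclideanLin.symm L.toLinearMap
  have hQ : Q ∈ unitaryGroup n 𝕜 := (L.toLinearIsometryEquiv rfl).toMatrix_mem_unitaryGroup
    (EuclideanSpace.basisFun n 𝕜) (EuclideanSpace.basisFun n 𝕜)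
  have hQA : Q * Aᴴ = Bᴴ := toEuclideanLin.injective <| by
    rw [toLpLin_mul _ 2, LinearEquiv.apply_symm_apply]
    exact LinearMap.ext hL
  refine ⟨star Q, Unitary.star_mem hQ, ?_⟩
  rw [star_eq_conjTranspose, ← conjTranspose_conjTranspose A, ← conjTranspose_mul, hQA,
    conjTranspose_conjTranspose]

end Matrix

theorem hessian_constant_rank_on_factorization_fiber_general
    (d k : ℕ) (h : Matrix (Fin d) (Fin d) ℝ → ℝ)
    (B₁ B₂ : Matrix (Fin d) (Fin k) ℝ) (hB : B₁ * B₁ᵀ = B₂ * B₂ᵀ) :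
    LinearMap.rank
        (fderiv ℝ (fderiv ℝ (fun B : Matrix (Fin d) (Fin k) ℝ => h (B * Bᵀ))) B₁).toLinearMap =
      LinearMap.rank
        (fderiv ℝ (fderiv ℝ (fun B : Matrix (Fin d) (Fin k) ℝ => h (B * Bᵀ))) B₂).toLinearMap := by
  simp only [← conjTranspose_eq_transpose_of_trivial] at hB ⊢
  obtain ⟨U, hU, rfl⟩ := exists_mem_unitaryGroup_eq_mul_of_mul_conjTranspose_eq hB
  let e := (UnitaryGroup.mulRightLinearEquiv (m := Fin d) ⟨U, hU⟩).toContinuousLinearEquiv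
  have hg : (fun B => h (B * Bᴴ)) ∘ e = fun B => h (B * Bᴴ) :=
    funext fun B => congrArg h (mul_mul_conjTranspose_of_mem_unitaryGroup hU B)
  exact (rank_fderiv_fderiv_apply_eq_of_comp_eq hg B₁).symm

/-- **Constant rank of the Hessian on factorization fibers.**
Let `h : ℝ^{d×d} → ℝ` be `C²` and `g(B) = h(BBᵀ)` on `ℝ^{d×k}`.  Then for all
`B₁, B₂` with `B₁B₁ᵀ = B₂B₂ᵀ`, the Hessians of `g` (second Fréchet derivatives) at
`B₁` and `B₂` have the same rank; in particular `∇²g` has constant rank on any set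
`{B : BBᵀ = X}`. -/
theorem hessian_constant_rank_on_factorization_fiber
    (d k : ℕ) (h : Matrix (Fin d) (Fin d) ℝ → ℝ) (hh : ContDiff ℝ 2 h)
    (B₁ B₂ : Matrix (Fin d) (Fin k) ℝ) (hB : B₁ * B₁ᵀ = B₂ * B₂ᵀ) :
    LinearMap.rank
        (fderiv ℝ (fderiv ℝ (fun B : Matrix (Fin d) (Fin k) ℝ => h (B * Bᵀ))) B₁).toLinearMap =
      LinearMap.rank
        (fderiv ℝ (fderiv ℝ (fun B : Matrix (Fin d) (Fin k) ℝ => h (B * Bᵀ))) B₂).toLinearMap :=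
  hessian_constant_rank_on_factorization_fiber_general d k h B₁ B₂ hB
end
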